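/- arXiv:1104.4258 — 8 statements merged into one kernel-verified Lean document; each statement's English description precedes it below -/
import Mathlib

section
/- Assume in addition that σ_n = T almost surely for every n ∈ ℕ, and that for some p > 1 one has sup_{n ∈ ℕ} 𝔼[ sup_{t ∈ [0,T]} ‖X_n(t)‖^p ] < ∞. Then for every 1 ≤ q < p one has 𝔼[ sup_{t ∈ [0,T]} ‖X_n(t) − X_∞(t)‖^q ] → 0 as n → ∞ (i.e., X_n → X_∞ in L^q(Ω; C([0,T]; E))). -/
/-!
Compare with the localisations `X^{(r)}` at the first time `‖X_∞‖` exceeds `r`: there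
`‖X^{(r)}_∞‖ ≥ r`, while `X^{(r)}_n = X_n` has norm `< r - 1` unless `sup ‖X_n‖ ≥ r - 1`. By (b) and
Markov's inequality for the uniform `p`-th moments, `P(σ_∞ < T) ≤ sup_n P(sup ‖X_n‖ ≥ r - 1) → 0`.
So all paths are a.s. continuous on `[0, T]`, and where `sup ‖X_n‖` and `sup ‖X_∞‖` both stay
below `r` the processes agree with their localisations; hence (b) gives `sup ‖X_n - X_∞‖ → 0` in
probability. Fatou along an a.s. convergent subsequence gives `X_∞` the same `p`-th moment bound,
so the differences are bounded in `L^p`, and convergence in probability with bounded `p`-th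
moments yields convergence of the `q`-th moments for `q < p`.
-/

open MeasureTheory Filter Set
open scoped ENNReal Topology

section Path

variable {E : Type*} [SeminormedAddCommGroup E]

noncomputable def supNormOn (T : ℝ) (g : ℝ → E) : ℝ := ⨆ t : Icc (0:ℝ) T, ‖g t‖

noncomputable def exitTime (T r s : ℝ) (g : ℝ → E) : ℝ :=
  sInf ({t | t ∈ Ioo 0 s ∧ r < ‖g t‖} ∪ {T})

variable {T r s : ℝ} {g h : ℝ → E}

lemma supNormOn_nonneg : 0 ≤ supNormOn T g := Real.iSup_nonneg fun _ => norm_nonneg _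

lemma supNormOn_le {c : ℝ} (hc : 0 ≤ c) (h : ∀ t ∈ Icc 0 T, ‖g t‖ ≤ c) : supNormOn T g ≤ c :=
  Real.iSup_le (fun t => h t t.2) hc

lemma norm_le_supNormOn (hg : ContinuousOn g (Icc 0 T)) {t : ℝ} (ht : t ∈ Icc 0 T) :
    ‖g t‖ ≤ supNormOn T g := by
  refine le_ciSup (f := fun t : Icc (0:ℝ) T => ‖g t‖) ?_ ⟨t, ht⟩
  exact (isCompact_Icc.bddAbove_image hg.norm).mono
    (range_subset_iff.2 fun t => mem_image_of_mem (fun x => ‖g x‖) t.2)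

lemma supNormOn_congr (hgh : EqOn g h (Icc 0 T)) : supNormOn T g = supNormOn T h :=
  iSup_congr fun t => by rw [hgh t.2]

lemma supNormOn_sub_le (hg : ContinuousOn g (Icc 0 T)) (hh : ContinuousOn h (Icc 0 T)) :
    supNormOn T (fun t => g t - h t) ≤ supNormOn T g + supNormOn T h :=
  supNormOn_le (add_nonneg supNormOn_nonneg supNormOn_nonneg) fun _ ht =>
    (norm_sub_le _ _).trans (add_le_add (norm_le_supNormOn hg ht) (norm_le_supNormOn hh ht))

lemma abs_sub_supNormOn_le (hg : ContinuousOn g (Icc 0 T)) (hh : ContinuousOn h (Icc 0 T)) :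
    |supNormOn T g - supNormOn T h| ≤ supNormOn T (fun t => g t - h t) := by
  rw [abs_sub_le_iff, sub_le_iff_le_add, sub_le_iff_le_add]
  constructor
  · refine supNormOn_le (add_nonneg supNormOn_nonneg supNormOn_nonneg) fun t ht => ?_
    calc ‖g t‖ ≤ ‖g t - h t‖ + ‖h t‖ := norm_le_norm_sub_add _ _
      _ ≤ _ := add_le_add (norm_le_supNormOn (hg.sub hh) ht) (norm_le_supNormOn hh ht)
  · refine supNormOn_le (add_nonneg supNormOn_nonneg supNormOn_nonneg) fun t ht => ?_
    calc ‖h t‖ ≤ ‖g t - h t‖ + ‖g t‖ := by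
          rw [norm_sub_rev]; exact norm_le_norm_sub_add _ _
      _ ≤ _ := add_le_add (norm_le_supNormOn (hg.sub hh) ht) (norm_le_supNormOn hg ht)

lemma bddBelow_exitTimeSet : BddBelow ({t | t ∈ Ioo 0 s ∧ r < ‖g t‖} ∪ {T}) := by
  refine ⟨min 0 T, ?_⟩
  rintro t (ht | rfl)
  · exact (min_le_left _ _).trans ht.1.1.le
  · exact min_le_right _ _

lemma exitTime_le_of_lt_norm {t : ℝ} (ht : t ∈ Ioo 0 s) (hr : r < ‖g t‖) :
    exitTime T r s g ≤ t :=
  csInf_le bddBelow_exitTimeSet (Or.inl ⟨ht, hr⟩)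

lemma exitTime_eq_of_forall_norm_le (h : ∀ t ∈ Ioo 0 s, ‖g t‖ ≤ r) : exitTime T r s g = T := by
  have : {t | t ∈ Ioo 0 s ∧ r < ‖g t‖} = ∅ :=
    eq_empty_of_forall_notMem fun t ht => (h t ht.1).not_gt ht.2
  rw [exitTime, this, empty_union, csInf_singleton]

lemma exitTime_lt_of_frequently (hs : 0 < s) (hsT : s < T)
    (hexp : ∃ᶠ t in 𝓝[<] s, r < ‖g t‖) : exitTime T r s g < T := by
  obtain ⟨t, hrt, ht⟩ := (hexp.and_eventually (Ioo_mem_nhdsLT hs)).exists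
  exact (exitTime_le_of_lt_norm ht hrt).trans_lt (ht.2.trans hsT)

lemma exitTime_mem_Ico_and_le_norm (hg : ContinuousOn g (Ico 0 s))
    (hlt : exitTime T r s g < T) :
    exitTime T r s g ∈ Ico 0 s ∧ r ≤ ‖g (exitTime T r s g)‖ := by
  set S := {t | t ∈ Ioo 0 s ∧ r < ‖g t‖}
  have hS : S.Nonempty := by
    by_contra hS
    exact hlt.ne (exitTime_eq_of_forall_norm_le fun t ht => not_lt.1 fun hr => hS ⟨t, ht, hr⟩)
  have hbdd : BddBelow S := (bddBelow_exitTimeSet (T := T)).mono subset_union_left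
  have heq : exitTime T r s g = sInf S := by
    have := csInf_union hbdd hS (bddBelow_singleton (a := T)) (singleton_nonempty T)
    rw [csInf_singleton] at this
    rw [exitTime, this] at hlt ⊢
    exact min_eq_left (min_lt_iff.1 hlt |>.resolve_right (lt_irrefl T)).le
  rw [heq]
  obtain ⟨t, ht⟩ := hS
  have hmem : sInf S ∈ Ico 0 s :=
    ⟨le_csInf ⟨t, ht⟩ fun u hu => hu.1.1.le, (csInf_le hbdd ht).trans_lt ht.1.2⟩
  refine ⟨hmem, ?_⟩
  have hcl := ((hg _ hmem).norm.mono fun u hu => Ioo_subset_Ico_self hu.1).mem_closure_image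
    (csInf_mem_closure ⟨t, ht⟩ hbdd)
  have himage : (fun u => ‖g u‖) '' S ⊆ Ici r := image_subset_iff.2 fun u hu => hu.2.le
  exact closure_minimal himage isClosed_Ici hcl

lemma eqOn_Icc_of_supNormOn_lt (hg : ContinuousOn g (Icc 0 T)) (hr : supNormOn T g < r)
    (hh : EqOn h g (Icc 0 (exitTime T r T g))) : EqOn h g (Icc 0 T) := by
  rwa [exitTime_eq_of_forall_norm_le fun t ht =>
    (norm_le_supNormOn hg (Ioo_subset_Icc_self ht)).trans hr.le] at hh

lemma one_le_supNormOn_sub_of_frequently {g h gi hi : ℝ → E} {s : ℝ} (hs0 : 0 < s)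
    (hsT : s < T) (hgi : ContinuousOn gi (Ico 0 s)) (hexp : ∃ᶠ t in 𝓝[<] s, r < ‖gi t‖)
    (hg : ContinuousOn g (Icc 0 T)) (hgr : supNormOn T g < r - 1)
    (hh : EqOn h g (Icc 0 (exitTime T r T g))) (hhi : EqOn hi gi (Icc 0 (exitTime T r s gi)))
    (hcont : ContinuousOn (fun t => h t - hi t) (Icc 0 T)) :
    1 ≤ supNormOn T (fun t => h t - hi t) := by
  set ρ := exitTime T r s gi
  have hρT : ρ < T := exitTime_lt_of_frequently hs0 hsT hexp
  obtain ⟨hρs, hrρ⟩ := exitTime_mem_Ico_and_le_norm hgi hρT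
  have hρ : ρ ∈ Icc 0 T := ⟨hρs.1, hρT.le⟩
  have hhρ : ‖h ρ‖ < r - 1 := by
    rw [eqOn_Icc_of_supNormOn_lt hg (by linarith) hh hρ]
    exact (norm_le_supNormOn hg hρ).trans_lt hgr
  have hhiρ : r ≤ ‖hi ρ‖ := by rwa [hhi ⟨hρs.1, le_rfl⟩]
  calc 1 ≤ ‖hi ρ‖ - ‖h ρ‖ := by linarith
    _ ≤ ‖h ρ - hi ρ‖ := by rw [norm_sub_rev]; exact norm_sub_norm_le _ _
    _ ≤ _ := norm_le_supNormOn hcont hρ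

end Path

section Measure

variable {Ω : Type*} [MeasurableSpace Ω] {μ : Measure Ω}

lemma tendstoInMeasure_of_measure_ne_le {ι κ F : Type*} [EDist F] {l : Filter ι}
    {l' : Filter κ} [l'.NeBot] {f : ι → Ω → F} {g : κ → ι → Ω → F} {h : Ω → F}
    {b : κ → ℝ≥0∞} (hb : Tendsto b l' (𝓝 0)) (hg : ∀ᶠ r in l', TendstoInMeasure μ (g r) l h)
    (hfg : ∀ᶠ r in l', ∀ i, μ {ω | f i ω ≠ g r i ω} ≤ b r) : TendstoInMeasure μ f l h := by
  intro ε hε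
  rw [ENNReal.tendsto_nhds_zero]
  intro δ hδ
  have hδ2 := ENNReal.half_pos hδ.ne'
  obtain ⟨r, hgr, hfgr, hbr⟩ :=
    (hg.and (hfg.and ((ENNReal.tendsto_nhds_zero.1 hb) _ hδ2))).exists
  filter_upwards [(ENNReal.tendsto_nhds_zero.1 (hgr ε hε)) _ hδ2] with i hi
  calc μ {ω | ε ≤ edist (f i ω) (h ω)}
      ≤ μ ({ω | f i ω ≠ g r i ω} ∪ {ω | ε ≤ edist (g r i ω) (h ω)}) := by
        refine measure_mono fun ω hω => ?_
        by_cases heq : f i ω = g r i ω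
        · exact Or.inr (show ε ≤ edist (g r i ω) (h ω) by rwa [← heq])
        · exact Or.inl heq
    _ ≤ δ / 2 + δ / 2 := (measure_union_le _ _).trans (add_le_add ((hfgr i).trans hbr) hi)
    _ = δ := ENNReal.add_halves δ

lemma tendstoInMeasure_of_dist_le {ι F : Type*} [PseudoMetricSpace F] {l : Filter ι}
    {f : ι → Ω → F} {g : Ω → F} {h : ι → Ω → ℝ} (hh : TendstoInMeasure μ h l 0)
    (hfg : ∀ i, ∀ᵐ ω ∂μ, dist (f i ω) (g ω) ≤ h i ω) : TendstoInMeasure μ f l g := by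
  rw [tendstoInMeasure_iff_dist] at hh ⊢
  intro ε hε
  refine tendsto_of_tendsto_of_tendsto_of_le_of_le tendsto_const_nhds (hh ε hε)
    (fun _ => zero_le) fun i => measure_mono_ae ?_
  filter_upwards [hfg i] with ω hω hε'
  exact hε'.trans (hω.trans ((le_abs_self _).trans_eq (Real.dist_0_eq_abs _).symm))

lemma tendsto_measure_le_atTop [IsFiniteMeasure μ] {f : Ω → ℝ} (hf : AEMeasurable f μ) :
    Tendsto (fun r => μ {ω | r ≤ f ω}) atTop (𝓝 0) := by
  have hempty : ⋂ r : ℝ, {ω | r ≤ f ω} = ∅ :=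
    eq_empty_of_forall_notMem fun ω hω => by
      have : f ω + 1 ≤ f ω := mem_iInter.1 hω (f ω + 1)
      linarith
  have := tendsto_measure_iInter_atTop (μ := μ) (s := fun r : ℝ => {ω | r ≤ f ω})
    (fun _ => nullMeasurableSet_le aemeasurable_const hf)
    (fun _ _ hrr' _ hω => hrr'.trans hω) ⟨0, measure_ne_top _ _⟩
  rwa [hempty, measure_empty] at this

lemma tendsto_iSup_measure_le_atTop {f : ℕ → Ω → ℝ} (hf : ∀ n, AEMeasurable (f n) μ)
    {p : ℝ} (hp : 0 < p) {C : ℝ≥0∞} (hC : C ≠ ⊤)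
    (hbdd : ∀ n, ∫⁻ ω, ENNReal.ofReal (f n ω ^ p) ∂μ ≤ C) :
    Tendsto (fun r => ⨆ n, μ {ω | r ≤ f n ω}) atTop (𝓝 0) := by
  have hmarkov : ∀ r, 0 < r → ∀ n, μ {ω | r ≤ f n ω} ≤ C / ENNReal.ofReal (r ^ p) := by
    intro r hr n
    have hrp : ENNReal.ofReal (r ^ p) ≠ 0 := by positivity
    calc μ {ω | r ≤ f n ω} ≤ μ {ω | ENNReal.ofReal (r ^ p) ≤ ENNReal.ofReal (f n ω ^ p)} :=
          measure_mono fun ω hω =>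
            ENNReal.ofReal_le_ofReal (Real.rpow_le_rpow hr.le hω hp.le)
      _ ≤ (∫⁻ ω, ENNReal.ofReal (f n ω ^ p) ∂μ) / ENNReal.ofReal (r ^ p) :=
          meas_ge_le_lintegral_div ((hf n).pow_const p).ennreal_ofReal hrp ENNReal.ofReal_ne_top
      _ ≤ C / ENNReal.ofReal (r ^ p) := ENNReal.div_le_div_right (hbdd n) _
  have hlim : Tendsto (fun r => C / ENNReal.ofReal (r ^ p)) atTop (𝓝 0) := by
    have := ENNReal.Tendsto.const_div (a := C)
      (ENNReal.tendsto_ofReal_atTop.comp (tendsto_rpow_atTop hp)) (Or.inr hC)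
    rwa [ENNReal.div_top] at this
  refine tendsto_of_tendsto_of_tendsto_of_le_of_le' tendsto_const_nhds hlim
    (Eventually.of_forall fun _ => zero_le) ?_
  filter_upwards [eventually_gt_atTop 0] with r hr
  exact iSup_le (hmarkov r hr)

lemma lintegral_ofReal_rpow_le_of_tendstoInMeasure {f : ℕ → Ω → ℝ} {g : Ω → ℝ}
    (hfg : TendstoInMeasure μ f atTop g) (hf : ∀ n, AEMeasurable (f n) μ) {p : ℝ} (hp : 0 < p)
    {C : ℝ≥0∞} (hbdd : ∀ n, ∫⁻ ω, ENNReal.ofReal (f n ω ^ p) ∂μ ≤ C) :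
    ∫⁻ ω, ENNReal.ofReal (g ω ^ p) ∂μ ≤ C := by
  obtain ⟨ns, -, hns⟩ := hfg.exists_seq_tendsto_ae
  have hcont : Continuous fun x : ℝ => ENNReal.ofReal (x ^ p) :=
    ENNReal.continuous_ofReal.comp (Real.continuous_rpow_const hp.le)
  calc ∫⁻ ω, ENNReal.ofReal (g ω ^ p) ∂μ
      = ∫⁻ ω, liminf (fun k => ENNReal.ofReal (f (ns k) ω ^ p)) atTop ∂μ :=
        lintegral_congr_ae (hns.mono fun ω hω => ((hcont.tendsto _).comp hω).liminf_eq.symm)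
    _ ≤ liminf (fun k => ∫⁻ ω, ENNReal.ofReal (f (ns k) ω ^ p) ∂μ) atTop :=
        lintegral_liminf_le' fun k => ((hf (ns k)).pow_const p).ennreal_ofReal
    _ ≤ C := liminf_le_of_frequently_le' (Frequently.of_forall fun k => hbdd (ns k))

lemma lintegral_ofReal_rpow_le_of_le_add {f g h : Ω → ℝ} (hf : 0 ≤ f) (hg : 0 ≤ g)
    (hh : 0 ≤ h) (hfgh : ∀ᵐ ω ∂μ, f ω ≤ g ω + h ω) (hgm : AEMeasurable g μ) {p : ℝ}
    (hp : 1 ≤ p) :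
    ∫⁻ ω, ENNReal.ofReal (f ω ^ p) ∂μ ≤ 2 ^ (p - 1) *
      (∫⁻ ω, ENNReal.ofReal (g ω ^ p) ∂μ + ∫⁻ ω, ENNReal.ofReal (h ω ^ p) ∂μ) := by
  have hp0 : 0 ≤ p := zero_le_one.trans hp
  have hpt : ∀ᵐ ω ∂μ, ENNReal.ofReal (f ω ^ p) ≤ 2 ^ (p - 1) *
      (ENNReal.ofReal (g ω ^ p) + ENNReal.ofReal (h ω ^ p)) := by
    filter_upwards [hfgh] with ω hω
    rw [← ENNReal.ofReal_rpow_of_nonneg (hf ω) hp0, ← ENNReal.ofReal_rpow_of_nonneg (hg ω) hp0,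
      ← ENNReal.ofReal_rpow_of_nonneg (hh ω) hp0]
    calc ENNReal.ofReal (f ω) ^ p ≤ (ENNReal.ofReal (g ω) + ENNReal.ofReal (h ω)) ^ p := by
          rw [← ENNReal.ofReal_add (hg ω) (hh ω)]
          exact ENNReal.rpow_le_rpow (ENNReal.ofReal_le_ofReal hω) hp0
      _ ≤ _ := ENNReal.rpow_add_le_mul_rpow_add_rpow _ _ hp
  calc ∫⁻ ω, ENNReal.ofReal (f ω ^ p) ∂μ
      ≤ ∫⁻ ω, 2 ^ (p - 1) * (ENNReal.ofReal (g ω ^ p) + ENNReal.ofReal (h ω ^ p)) ∂μ :=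
        lintegral_mono_ae hpt
    _ = _ := by
        rw [lintegral_const_mul' _ _ (by simp),
          lintegral_add_left' (hgm.pow_const p).ennreal_ofReal]

lemma ofReal_rpow_le_add_ite_add {x η l q p : ℝ} (hx : 0 ≤ x) (hl : 0 < l)
    (hq : 0 ≤ q) (hqp : q ≤ p) :
    ENNReal.ofReal (x ^ q) ≤ ENNReal.ofReal (η ^ q) + (if η ≤ x then ENNReal.ofReal (l ^ q) else 0)
      + ENNReal.ofReal (l ^ (q - p)) * ENNReal.ofReal (x ^ p) := by
  rcases lt_or_ge x η with hxη | hηx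
  · exact (ENNReal.ofReal_le_ofReal (Real.rpow_le_rpow hx hxη.le hq)).trans
      (le_self_add.trans le_self_add)
  rcases le_or_gt x l with hxl | hlx
  · calc ENNReal.ofReal (x ^ q) ≤ ENNReal.ofReal (l ^ q) :=
          ENNReal.ofReal_le_ofReal (Real.rpow_le_rpow hx hxl hq)
      _ ≤ _ := by rw [if_pos hηx]; exact le_add_self.trans le_self_add
  · calc ENNReal.ofReal (x ^ q) = ENNReal.ofReal (x ^ (q - p) * x ^ p) := by
          rw [← Real.rpow_add (hl.trans hlx), sub_add_cancel]
      _ ≤ ENNReal.ofReal (l ^ (q - p) * x ^ p) :=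
          ENNReal.ofReal_le_ofReal (mul_le_mul_of_nonneg_right
            (Real.rpow_le_rpow_of_nonpos hl hlx.le (by linarith)) (by positivity))
      _ ≤ _ := by
          rw [ENNReal.ofReal_mul (by positivity)]
          exact le_add_self

lemma lintegral_ofReal_rpow_le_add {f : Ω → ℝ} (hf0 : 0 ≤ f) {η l q p : ℝ} (hl : 0 < l)
    (hq : 0 ≤ q) (hqp : q ≤ p) :
    ∫⁻ ω, ENNReal.ofReal (f ω ^ q) ∂μ ≤ ENNReal.ofReal (η ^ q) * μ univ
      + ENNReal.ofReal (l ^ q) * μ {ω | η ≤ f ω}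
      + ENNReal.ofReal (l ^ (q - p)) * ∫⁻ ω, ENNReal.ofReal (f ω ^ p) ∂μ := by
  -- `f` need not be measurable (a difference of two Borel maps into a nonseparable space need
  -- not be), so the level set is replaced by a measurable hull of the same measure.
  set S := toMeasurable μ {ω | η ≤ f ω}
  have hS : MeasurableSet S := measurableSet_toMeasurable _ _
  have hpt : ∀ ω, ENNReal.ofReal (f ω ^ q) ≤ ENNReal.ofReal (η ^ q)
      + S.indicator (fun _ => ENNReal.ofReal (l ^ q)) ω
      + ENNReal.ofReal (l ^ (q - p)) * ENNReal.ofReal (f ω ^ p) := by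
    intro ω
    refine (ofReal_rpow_le_add_ite_add (η := η) (hf0 ω) hl hq hqp).trans ?_
    gcongr
    split_ifs with h
    · rw [indicator_of_mem (subset_toMeasurable μ {ω | η ≤ f ω} h)]
    · exact zero_le
  calc ∫⁻ ω, ENNReal.ofReal (f ω ^ q) ∂μ
      ≤ ∫⁻ ω, (ENNReal.ofReal (η ^ q) + S.indicator (fun _ => ENNReal.ofReal (l ^ q)) ω
          + ENNReal.ofReal (l ^ (q - p)) * ENNReal.ofReal (f ω ^ p)) ∂μ := lintegral_mono hpt
    _ = _ := by
        have hm : Measurable fun ω => ENNReal.ofReal (η ^ q)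
            + S.indicator (fun _ => ENNReal.ofReal (l ^ q)) ω :=
          (measurable_const.indicator hS).const_add _
        rw [lintegral_add_left hm,
          lintegral_add_left measurable_const, lintegral_const, lintegral_indicator_const hS,
          measure_toMeasurable, lintegral_const_mul' _ _ ENNReal.ofReal_ne_top]

lemma tendsto_lintegral_ofReal_rpow_of_tendstoInMeasure [IsFiniteMeasure μ]
    {f : ℕ → Ω → ℝ} (hf0 : ∀ n, 0 ≤ f n)
    (hlim : TendstoInMeasure μ f atTop 0) {q p : ℝ} (hq : 0 < q) (hqp : q < p) {M : ℝ≥0∞}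
    (hM : M ≠ ⊤) (hbdd : ∀ n, ∫⁻ ω, ENNReal.ofReal (f n ω ^ p) ∂μ ≤ M) :
    Tendsto (fun n => ∫⁻ ω, ENNReal.ofReal (f n ω ^ q) ∂μ) atTop (𝓝 0) := by
  rw [ENNReal.tendsto_nhds_zero]
  intro ε hε
  have hε2 := ENNReal.half_pos hε.ne'
  have hsmall : Tendsto (fun η : ℝ => ENNReal.ofReal (η ^ q) * μ univ) (𝓝 0) (𝓝 0) := by
    have := ENNReal.Tendsto.mul_const
      ((ENNReal.continuous_ofReal.comp (Real.continuous_rpow_const hq.le)).tendsto 0)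
      (Or.inr (measure_ne_top μ univ))
    simpa [Real.zero_rpow hq.ne'] using this
  obtain ⟨η, hηε, hη0⟩ := ((hsmall.mono_left nhdsWithin_le_nhds).eventually
    (gt_mem_nhds hε2) |>.and (self_mem_nhdsWithin (s := Ioi 0))).exists
  have hlarge : Tendsto (fun l : ℝ => ENNReal.ofReal (l ^ (q - p)) * M) atTop (𝓝 0) := by
    have := ENNReal.Tendsto.mul_const
      (ENNReal.tendsto_ofReal (tendsto_rpow_neg_atTop (sub_pos.2 hqp))) (Or.inr hM)
    simpa using this
  obtain ⟨l, hlε, hl0⟩ := ((hlarge.eventually (gt_mem_nhds hε2)).and (eventually_gt_atTop 0)).exists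
  have hmiddle : Tendsto (fun n => ENNReal.ofReal (l ^ q) * μ {ω | η ≤ f n ω}) atTop (𝓝 0) := by
    have h := tendstoInMeasure_iff_dist.1 hlim η hη0
    simp only [Pi.zero_apply, Real.dist_0_eq_abs, abs_of_nonneg (hf0 _ _)] at h
    simpa using ENNReal.Tendsto.const_mul (a := ENNReal.ofReal (l ^ q)) h
      (Or.inr ENNReal.ofReal_ne_top)
  have hsum : ENNReal.ofReal (η ^ q) * μ univ + 0 + ENNReal.ofReal (l ^ (q - p)) * M < ε := by
    rw [add_zero, ← ENNReal.add_halves ε]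
    exact ENNReal.add_lt_add hηε hlε
  filter_upwards [((tendsto_const_nhds.add hmiddle).add tendsto_const_nhds).eventually
    (gt_mem_nhds hsum)] with n hn
  calc ∫⁻ ω, ENNReal.ofReal (f n ω ^ q) ∂μ
      ≤ _ := lintegral_ofReal_rpow_le_add (hf0 n) hl0 hq.le hqp.le
    _ ≤ ENNReal.ofReal (η ^ q) * μ univ + ENNReal.ofReal (l ^ q) * μ {ω | η ≤ f n ω}
        + ENNReal.ofReal (l ^ (q - p)) * M := by gcongr; exact hbdd n
    _ ≤ ε := hn.le

end Measure

section Localization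

variable {Ω : Type*} [MeasurableSpace Ω] {μ : Measure Ω} {E : Type*} [NormedAddCommGroup E]
  {T : ℝ} {X : ℕ → ℝ → Ω → E} {Xi : ℝ → Ω → E} {Y : ℕ → ℝ → ℝ → Ω → E} {Yi : ℝ → ℝ → Ω → E}

lemma aemeasurable_supNormOn [MeasurableSpace E] [OpensMeasurableSpace E] {f : ℝ → Ω → E}
    (hf : ∀ t, Measurable (f t)) (hc : ∀ᵐ ω ∂μ, ContinuousOn (f · ω) (Icc 0 T)) :
    AEMeasurable (fun ω => supNormOn T (f · ω)) μ := by
  obtain ⟨S, hSc, hSd⟩ := TopologicalSpace.exists_countable_dense (Icc (0:ℝ) T)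
  have := hSc.to_subtype
  refine ⟨fun ω => ⨆ s : S, ‖f s ω‖, Measurable.iSup fun s => (hf _).norm, ?_⟩
  filter_upwards [hc] with ω hω
  exact (hSd.ciSup' (f := fun t : Icc (0:ℝ) T => ‖f t ω‖) hω.norm.domRestrict).symm

lemma ae_eq_of_frequently_of_tendstoInMeasure {σi : Ω → ℝ} (hσi : ∀ ω, σi ω ∈ Ioc 0 T)
    (hXi : ∀ ω, ContinuousOn (Xi · ω) (Ico 0 (σi ω)))
    (hexp : ∀ ω, σi ω < T → ∀ M : ℝ, ∃ᶠ t in 𝓝[<] σi ω, M < ‖Xi t ω‖)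
    (hX : ∀ n, ∀ᵐ ω ∂μ, ContinuousOn (X n · ω) (Icc 0 T))
    (hY : ∀ n r ω, Continuous (Y n r · ω)) (hYi : ∀ r ω, Continuous (Yi r · ω))
    (ha : ∀ n r, 0 < r →
      ∀ᵐ ω ∂μ, EqOn (Y n r · ω) (X n · ω) (Icc 0 (exitTime T r T (X n · ω))))
    (hai : ∀ r, 0 < r →
      ∀ᵐ ω ∂μ, EqOn (Yi r · ω) (Xi · ω) (Icc 0 (exitTime T r (σi ω) (Xi · ω))))
    (htight : Tendsto (fun r => ⨆ n, μ {ω | r ≤ supNormOn T (X n · ω)}) atTop (𝓝 0))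
    (hb : ∀ r, 0 < r → TendstoInMeasure μ
      (fun n ω => supNormOn T (fun t => Y n r t ω - Yi r t ω)) atTop 0) :
    ∀ᵐ ω ∂μ, σi ω = T := by
  have hbound : ∀ r, 0 < r → ∀ n, μ {ω | σi ω < T} ≤ μ {ω | r ≤ supNormOn T (X n · ω)}
      + μ {ω | 1 ≤ |supNormOn T (fun t => Y n (r + 1) t ω - Yi (r + 1) t ω)|} := by
    intro r hr n
    refine (measure_mono_ae ?_).trans (measure_union_le _ _)
    filter_upwards [hX n, ha n (r + 1) (by linarith), hai (r + 1) (by linarith)]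
      with ω hXω haω haiω hσω
    rcases le_or_gt r (supNormOn T (X n · ω)) with hXr | hXr
    · exact Or.inl hXr
    · exact Or.inr ((one_le_supNormOn_sub_of_frequently (hσi ω).1 hσω (hXi ω)
        (hexp ω hσω (r + 1)) hXω (by linarith) haω haiω
        ((hY n _ ω).sub (hYi _ ω)).continuousOn).trans (le_abs_self _))
  have hlimit : ∀ r, 0 < r → μ {ω | σi ω < T} ≤ ⨆ n, μ {ω | r ≤ supNormOn T (X n · ω)} := by
    intro r hr
    have hD := tendstoInMeasure_iff_dist.1 (hb (r + 1) (by linarith)) 1 one_pos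
    refine ge_of_tendsto (by simpa using tendsto_const_nhds.add hD) (Eventually.of_forall fun n =>
      (hbound r hr n).trans (add_le_add_left
        (le_iSup (fun n => μ {ω | r ≤ supNormOn T (X n · ω)}) n) _))
  have hnull : μ {ω | σi ω < T} = 0 :=
    le_antisymm (ge_of_tendsto htight ((eventually_gt_atTop 0).mono hlimit)) zero_le
  filter_upwards [measure_eq_zero_iff_ae_notMem.1 hnull] with ω hω
  exact le_antisymm (hσi ω).2 (not_lt.1 hω)

lemma tendstoInMeasure_supNormOn_sub
    (hX : ∀ n, ∀ᵐ ω ∂μ, ContinuousOn (X n · ω) (Icc 0 T))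
    (hXi : ∀ᵐ ω ∂μ, ContinuousOn (Xi · ω) (Icc 0 T))
    (ha : ∀ n r, 0 < r →
      ∀ᵐ ω ∂μ, EqOn (Y n r · ω) (X n · ω) (Icc 0 (exitTime T r T (X n · ω))))
    (hai : ∀ r, 0 < r →
      ∀ᵐ ω ∂μ, EqOn (Yi r · ω) (Xi · ω) (Icc 0 (exitTime T r T (Xi · ω))))
    (htight : Tendsto (fun r => ⨆ n, μ {ω | r ≤ supNormOn T (X n · ω)}) atTop (𝓝 0))
    (htighti : Tendsto (fun r => μ {ω | r ≤ supNormOn T (Xi · ω)}) atTop (𝓝 0))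
    (hb : ∀ r, 0 < r → TendstoInMeasure μ
      (fun n ω => supNormOn T (fun t => Y n r t ω - Yi r t ω)) atTop 0) :
    TendstoInMeasure μ (fun n ω => supNormOn T (fun t => X n t ω - Xi t ω)) atTop 0 := by
  refine tendstoInMeasure_of_measure_ne_le (by simpa using htight.add htighti)
    ((eventually_gt_atTop 0).mono hb) ?_
  filter_upwards [eventually_gt_atTop 0] with r hr n
  calc μ {ω | supNormOn T (fun t => X n t ω - Xi t ω)
          ≠ supNormOn T (fun t => Y n r t ω - Yi r t ω)}
      ≤ μ ({ω | r ≤ supNormOn T (X n · ω)} ∪ {ω | r ≤ supNormOn T (Xi · ω)}) := by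
        refine measure_mono_ae ?_
        filter_upwards [hX n, hXi, ha n r hr, hai r hr] with ω hXω hXiω haω haiω hne
        rcases le_or_gt r (supNormOn T (X n · ω)) with hXr | hXr
        · exact Or.inl hXr
        rcases le_or_gt r (supNormOn T (Xi · ω)) with hXir | hXir
        · exact Or.inr hXir
        refine absurd (supNormOn_congr fun t ht => ?_) hne
        exact (congrArg₂ (· - ·) (eqOn_Icc_of_supNormOn_lt hXω hXr haω ht)
          (eqOn_Icc_of_supNormOn_lt hXiω hXir haiω ht)).symm
    _ ≤ _ := (measure_union_le _ _).trans
        (add_le_add_left (le_iSup (fun n => μ {ω | r ≤ supNormOn T (X n · ω)}) n) _)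

lemma lintegral_ofReal_rpow_supNormOn_sub_le
    (hX : ∀ n, ∀ᵐ ω ∂μ, ContinuousOn (X n · ω) (Icc 0 T))
    (hXi : ∀ᵐ ω ∂μ, ContinuousOn (Xi · ω) (Icc 0 T))
    (hA : ∀ n, AEMeasurable (fun ω => supNormOn T (X n · ω)) μ)
    (hW : TendstoInMeasure μ (fun n ω => supNormOn T (fun t => X n t ω - Xi t ω)) atTop 0)
    {p : ℝ} (hp : 1 ≤ p) {C : ℝ≥0∞}
    (hbdd : ∀ n, ∫⁻ ω, ENNReal.ofReal (supNormOn T (X n · ω) ^ p) ∂μ ≤ C) (n : ℕ) :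
    ∫⁻ ω, ENNReal.ofReal (supNormOn T (fun t => X n t ω - Xi t ω) ^ p) ∂μ
      ≤ 2 ^ (p - 1) * (C + C) := by
  have hXibdd : ∫⁻ ω, ENNReal.ofReal (supNormOn T (Xi · ω) ^ p) ∂μ ≤ C := by
    refine lintegral_ofReal_rpow_le_of_tendstoInMeasure
      (tendstoInMeasure_of_dist_le hW fun n => ?_) hA (by linarith) hbdd
    filter_upwards [hX n, hXi] with ω h h'
    exact abs_sub_supNormOn_le h h'
  refine (lintegral_ofReal_rpow_le_of_le_add (g := fun ω => supNormOn T (X n · ω))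
    (h := fun ω => supNormOn T (Xi · ω)) (fun _ => supNormOn_nonneg)
    (fun _ => supNormOn_nonneg) (fun _ => supNormOn_nonneg) ?_ (hA n) hp).trans ?_
  · filter_upwards [hX n, hXi] with ω h h' using supNormOn_sub_le h h'
  · gcongr
    exact hbdd n

end Localization

theorem stmt_10_general
    {Ω : Type*} [MeasurableSpace Ω] (P : Measure Ω) [IsProbabilityMeasure P]
    {E : Type*} [NormedAddCommGroup E]
    [MeasurableSpace E] [BorelSpace E]
    (T : ℝ)
    -- the explosion times σ_n (n ∈ ℕ) and σ_∞
    (σ : ℕ → Ω → ℝ) (σi : Ω → ℝ)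
    (hσimem : ∀ ω, σi ω ∈ Set.Ioc 0 T)
    -- the processes X_n (n ∈ ℕ) and X_∞, jointly measurable
    (X : ℕ → ℝ → Ω → E) (Xi : ℝ → Ω → E)
    (hXmeas : ∀ n, Measurable fun p : ℝ × Ω => X n p.1 p.2)
    (hXimeas : Measurable fun p : ℝ × Ω => Xi p.1 p.2)
    -- path continuity on [0, σ_n(ω)), and on [0,T] if σ_n(ω) = T
    (hXcontT : ∀ n ω, σ n ω = T → ContinuousOn (fun t => X n t ω) (Set.Icc 0 T))
    (hXicont : ∀ ω, ContinuousOn (fun t => Xi t ω) (Set.Ico 0 (σi ω)))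
    (hXicontT : ∀ ω, σi ω = T → ContinuousOn (fun t => Xi t ω) (Set.Icc 0 T))
    -- σ_n is an explosion time: on {σ_n < T}, limsup_{t ↑ σ_n} ‖X_n(t)‖ = ∞
    (hexpli : ∀ ω, σi ω < T →
      ∀ M : ℝ, ∃ᶠ t in nhdsWithin (σi ω) (Set.Iio (σi ω)), M < ‖Xi t ω‖)
    -- the stopping times ρ_n^{(r)} = inf { t ∈ (0, σ_n) : ‖X_n(t)‖ > r }, inf ∅ := T
    (ρ : ℕ → ℝ → Ω → ℝ) (ρi : ℝ → Ω → ℝ)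
    (hρ : ∀ n r ω, ρ n r ω = sInf ({t : ℝ | t ∈ Set.Ioo 0 (σ n ω) ∧ r < ‖X n t ω‖} ∪ {T}))
    (hρi : ∀ r ω, ρi r ω = sInf ({t : ℝ | t ∈ Set.Ioo 0 (σi ω) ∧ r < ‖Xi t ω‖} ∪ {T}))
    -- the globally defined processes X_n^{(r)} (denoted Y n r) and X_∞^{(r)} (denoted Yi r)
    (Y : ℕ → ℝ → ℝ → Ω → E) (Yi : ℝ → ℝ → Ω → E)
    (hYcont : ∀ n r ω, Continuous fun t => Y n r t ω)
    (hYicont : ∀ r ω, Continuous fun t => Yi r t ω)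
    -- assumption (a)
    (ha : ∀ n r, 0 < r → ∀ᵐ ω ∂P, ∀ t ∈ Set.Icc 0 (ρ n r ω), Y n r t ω = X n t ω)
    (hai : ∀ r, 0 < r → ∀ᵐ ω ∂P, ∀ t ∈ Set.Icc 0 (ρi r ω), Yi r t ω = Xi t ω)
    -- assumption (b): X_n^{(r)} → X_∞^{(r)} in L⁰(Ω; C([0,T]; E))
    (hb : ∀ r, 0 < r → TendstoInMeasure P
      (fun n ω => ⨆ t : Set.Icc (0:ℝ) T, ‖Y n r (t : ℝ) ω - Yi r (t : ℝ) ω‖)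
      atTop (fun _ => (0 : ℝ)))
    -- additionally: σ_n = T almost surely for all n ∈ ℕ
    (hσT : ∀ n, ∀ᵐ ω ∂P, σ n ω = T)
    -- and sup_n 𝔼[ sup_t ‖X_n(t)‖^p ] < ∞ for some p > 1
    (p : ℝ) (hp : 1 < p) (C : ENNReal) (hC : C < ⊤)
    (hbdd : ∀ n : ℕ,
      ∫⁻ ω, ENNReal.ofReal ((⨆ t : Set.Icc (0:ℝ) T, ‖X n (t : ℝ) ω‖) ^ p) ∂P ≤ C) :
    ∀ q : ℝ, 1 ≤ q → q < p →
      Tendsto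
        (fun n => ∫⁻ ω, ENNReal.ofReal
          ((⨆ t : Set.Icc (0:ℝ) T, ‖X n (t : ℝ) ω - Xi (t : ℝ) ω‖) ^ q) ∂P)
        atTop (nhds 0) := by
  intro q hq1 hqp
  have hXc : ∀ n, ∀ᵐ ω ∂P, ContinuousOn (X n · ω) (Icc 0 T) := fun n =>
    (hσT n).mono fun ω hω => hXcontT n ω hω
  have hA : ∀ n, AEMeasurable (fun ω => supNormOn T (X n · ω)) P := fun n =>
    aemeasurable_supNormOn (fun t => (hXmeas n).comp measurable_prodMk_left) (hXc n)
  have htight := tendsto_iSup_measure_le_atTop hA (by linarith) hC.ne hbdd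
  have ha' : ∀ n r, 0 < r →
      ∀ᵐ ω ∂P, EqOn (Y n r · ω) (X n · ω) (Icc 0 (exitTime T r T (X n · ω))) := fun n r hr => by
    filter_upwards [ha n r hr, hσT n] with ω h hσ
    rwa [hρ, hσ] at h
  have hσiT : ∀ᵐ ω ∂P, σi ω = T :=
    ae_eq_of_frequently_of_tendstoInMeasure hσimem hXicont hexpli hXc hYcont hYicont ha'
      (fun r hr => (hai r hr).mono fun ω h => by rwa [hρi] at h) htight hb
  have hXic : ∀ᵐ ω ∂P, ContinuousOn (Xi · ω) (Icc 0 T) := hσiT.mono fun ω h => hXicontT ω h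
  have hW : TendstoInMeasure P (fun n ω => supNormOn T (fun t => X n t ω - Xi t ω)) atTop 0 := by
    refine tendstoInMeasure_supNormOn_sub hXc hXic ha' (fun r hr => ?_) htight
      (tendsto_measure_le_atTop (aemeasurable_supNormOn
        (fun t => hXimeas.comp measurable_prodMk_left) hXic)) hb
    filter_upwards [hai r hr, hσiT] with ω h hσ
    rwa [hρi, hσ] at h
  exact tendsto_lintegral_ofReal_rpow_of_tendstoInMeasure (fun _ _ => supNormOn_nonneg) hW
    (by linarith) hqp (by finiteness)
    (lintegral_ofReal_rpow_supNormOn_sub_le hXc hXic hA hW hp.le hbdd)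

theorem stmt_10
    {Ω : Type*} [MeasurableSpace Ω] (P : Measure Ω) [IsProbabilityMeasure P]
    {E : Type*} [NormedAddCommGroup E] [NormedSpace ℝ E] [CompleteSpace E]
    [MeasurableSpace E] [BorelSpace E]
    (T : ℝ) (hT : 0 < T)
    -- the explosion times σ_n (n ∈ ℕ) and σ_∞
    (σ : ℕ → Ω → ℝ) (σi : Ω → ℝ)
    (hσmeas : ∀ n, Measurable (σ n)) (hσimeas : Measurable σi)
    (hσmem : ∀ n ω, σ n ω ∈ Set.Ioc 0 T) (hσimem : ∀ ω, σi ω ∈ Set.Ioc 0 T)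
    -- the processes X_n (n ∈ ℕ) and X_∞, jointly measurable
    (X : ℕ → ℝ → Ω → E) (Xi : ℝ → Ω → E)
    (hXmeas : ∀ n, Measurable fun p : ℝ × Ω => X n p.1 p.2)
    (hXimeas : Measurable fun p : ℝ × Ω => Xi p.1 p.2)
    -- path continuity on [0, σ_n(ω)), and on [0,T] if σ_n(ω) = T
    (hXcont : ∀ n ω, ContinuousOn (fun t => X n t ω) (Set.Ico 0 (σ n ω)))
    (hXcontT : ∀ n ω, σ n ω = T → ContinuousOn (fun t => X n t ω) (Set.Icc 0 T))
    (hXicont : ∀ ω, ContinuousOn (fun t => Xi t ω) (Set.Ico 0 (σi ω)))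
    (hXicontT : ∀ ω, σi ω = T → ContinuousOn (fun t => Xi t ω) (Set.Icc 0 T))
    -- σ_n is an explosion time: on {σ_n < T}, limsup_{t ↑ σ_n} ‖X_n(t)‖ = ∞
    (hexpl : ∀ n ω, σ n ω < T →
      ∀ M : ℝ, ∃ᶠ t in nhdsWithin (σ n ω) (Set.Iio (σ n ω)), M < ‖X n t ω‖)
    (hexpli : ∀ ω, σi ω < T →
      ∀ M : ℝ, ∃ᶠ t in nhdsWithin (σi ω) (Set.Iio (σi ω)), M < ‖Xi t ω‖)
    -- the stopping times ρ_n^{(r)} = inf { t ∈ (0, σ_n) : ‖X_n(t)‖ > r }, inf ∅ := T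
    (ρ : ℕ → ℝ → Ω → ℝ) (ρi : ℝ → Ω → ℝ)
    (hρ : ∀ n r ω, ρ n r ω = sInf ({t : ℝ | t ∈ Set.Ioo 0 (σ n ω) ∧ r < ‖X n t ω‖} ∪ {T}))
    (hρi : ∀ r ω, ρi r ω = sInf ({t : ℝ | t ∈ Set.Ioo 0 (σi ω) ∧ r < ‖Xi t ω‖} ∪ {T}))
    -- the globally defined processes X_n^{(r)} (denoted Y n r) and X_∞^{(r)} (denoted Yi r)
    (Y : ℕ → ℝ → ℝ → Ω → E) (Yi : ℝ → ℝ → Ω → E)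
    (hYmeas : ∀ n r, Measurable fun p : ℝ × Ω => Y n r p.1 p.2)
    (hYimeas : ∀ r, Measurable fun p : ℝ × Ω => Yi r p.1 p.2)
    (hYcont : ∀ n r ω, Continuous fun t => Y n r t ω)
    (hYicont : ∀ r ω, Continuous fun t => Yi r t ω)
    -- assumption (a)
    (ha : ∀ n r, 0 < r → ∀ᵐ ω ∂P, ∀ t ∈ Set.Icc 0 (ρ n r ω), Y n r t ω = X n t ω)
    (hai : ∀ r, 0 < r → ∀ᵐ ω ∂P, ∀ t ∈ Set.Icc 0 (ρi r ω), Yi r t ω = Xi t ω)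
    -- assumption (b): X_n^{(r)} → X_∞^{(r)} in L⁰(Ω; C([0,T]; E))
    (hb : ∀ r, 0 < r → TendstoInMeasure P
      (fun n ω => ⨆ t : Set.Icc (0:ℝ) T, ‖Y n r (t : ℝ) ω - Yi r (t : ℝ) ω‖)
      atTop (fun _ => (0 : ℝ)))
    -- additionally: σ_n = T almost surely for all n ∈ ℕ
    (hσT : ∀ n, ∀ᵐ ω ∂P, σ n ω = T)
    -- and sup_n 𝔼[ sup_t ‖X_n(t)‖^p ] < ∞ for some p > 1
    (p : ℝ) (hp : 1 < p) (C : ENNReal) (hC : C < ⊤)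
    (hbdd : ∀ n : ℕ,
      ∫⁻ ω, ENNReal.ofReal ((⨆ t : Set.Icc (0:ℝ) T, ‖X n (t : ℝ) ω‖) ^ p) ∂P ≤ C) :
    ∀ q : ℝ, 1 ≤ q → q < p →
      Tendsto
        (fun n => ∫⁻ ω, ENNReal.ofReal
          ((⨆ t : Set.Icc (0:ℝ) T, ‖X n (t : ℝ) ω - Xi (t : ℝ) ω‖) ^ q) ∂P)
        atTop (nhds 0) :=
  stmt_10_general P T σ σi hσimem X Xi hXmeas hXimeas hXcontT hXicont hXicontT hexpli ρ ρi hρ hρi Y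
    Yi hYcont hYicont ha hai hb hσT p hp C hC hbdd
end

section
/- If u⁺(t₀) > u⁻(t₀) for some t₀ ∈ [α, β], then u⁺(t) > u⁻(t) for all t ∈ [t₀, β]. -/
open MeasureTheory Filter Set

/-- comparison principle: if `u⁺(t₀) > u⁻(t₀)` for some `t₀ ∈ [α, β]`,
then `u⁺(t) > u⁻(t)` for all `t ∈ [t₀, β]`. -/
theorem stmt_11
    (a b c d : ℝ) (hab : a < b) (hcd : c < d)
    (f : ℝ → ℝ → ℝ)
    (hfcont : ContinuousOn (fun p : ℝ × ℝ => f p.1 p.2) (Set.Ioo a b ×ˢ Set.Ioo c d))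
    (hflip : ∀ K : Set ℝ, K ⊆ Set.Ioo c d → IsCompact K →
      ∃ L : ℝ, 0 ≤ L ∧ ∀ t ∈ Set.Ioo a b, ∀ x ∈ K, ∀ y ∈ K, |f t x - f t y| ≤ L * |x - y|)
    (α β : ℝ) (hαβ : α ≤ β) (hsub : Set.Icc α β ⊆ Set.Ioo a b)
    -- u⁺ = up, u⁻ = um, with a.e. derivatives dup, dum
    (up um dup dum : ℝ → ℝ)
    (hupmem : ∀ t ∈ Set.Icc α β, up t ∈ Set.Ioo c d)
    (hummem : ∀ t ∈ Set.Icc α β, um t ∈ Set.Ioo c d)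
    -- absolute continuity: a.e. differentiability, integrable derivative, FTC
    (hupderiv : ∀ᵐ t ∂(volume.restrict (Set.Icc α β)), HasDerivAt up (dup t) t)
    (humderiv : ∀ᵐ t ∂(volume.restrict (Set.Icc α β)), HasDerivAt um (dum t) t)
    (hupint : IntegrableOn dup (Set.Icc α β))
    (humint : IntegrableOn dum (Set.Icc α β))
    (hupftc : ∀ s t : ℝ, α ≤ s → s ≤ t → t ≤ β → up t = up s + ∫ r in s..t, dup r)
    (humftc : ∀ s t : ℝ, α ≤ s → s ≤ t → t ≤ β → um t = um s + ∫ r in s..t, dum r)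
    -- differential inequalities, a.e. on (α, β)
    (hupineq : ∀ᵐ t ∂(volume.restrict (Set.Ioo α β)), f t (up t) ≤ dup t)
    (humineq : ∀ᵐ t ∂(volume.restrict (Set.Ioo α β)), dum t ≤ f t (um t))
    (t₀ : ℝ) (ht₀ : t₀ ∈ Set.Icc α β) (hinit : um t₀ < up t₀) :
    ∀ t ∈ Set.Icc t₀ β, um t < up t := by
  -- continuity of up, um on [α, β]
  have hupc : ContinuousOn up (Set.Icc α β) := by
    have hint : IntegrableOn dup (Set.uIcc α β) := by rwa [Set.uIcc_of_le hαβ]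
    have h1 := intervalIntegral.continuousOn_primitive_interval (a := α) (b := β)
      (μ := volume) hint
    rw [Set.uIcc_of_le hαβ] at h1
    exact (continuousOn_const.add h1).congr fun s hs => hupftc α s le_rfl hs.1 hs.2
  have humc : ContinuousOn um (Set.Icc α β) := by
    have hint : IntegrableOn dum (Set.uIcc α β) := by rwa [Set.uIcc_of_le hαβ]
    have h1 := intervalIntegral.continuousOn_primitive_interval (a := α) (b := β)
      (μ := volume) hint
    rw [Set.uIcc_of_le hαβ] at h1
    exact (continuousOn_const.add h1).congr fun s hs => humftc α s le_rfl hs.1 hs.2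
  set w : ℝ → ℝ := fun s => up s - um s with hw
  have hwc : ContinuousOn w (Set.Icc α β) := hupc.sub humc
  -- Lipschitz constant on compact K
  set K : Set ℝ := up '' Set.Icc α β ∪ um '' Set.Icc α β with hK
  have hKsub : K ⊆ Set.Ioo c d := by
    rintro x (⟨s, hs, rfl⟩ | ⟨s, hs, rfl⟩)
    · exact hupmem s hs
    · exact hummem s hs
  have hKcpt : IsCompact K :=
    (isCompact_Icc.image_of_continuousOn hupc).union (isCompact_Icc.image_of_continuousOn humc)
  obtain ⟨L, hL0, hL⟩ := hflip K hKsub hKcpt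
  intro t ht
  by_contra hcon
  push_neg at hcon
  have htαβ : t ∈ Set.Icc α β := ⟨ht₀.1.trans ht.1, ht.2⟩
  -- τ = first point ≥ t₀ where w ≤ 0
  set S : Set ℝ := Set.Icc t₀ t ∩ w ⁻¹' Set.Iic 0 with hS
  have hSsub : S ⊆ Set.Icc α β := fun s hs =>
    ⟨ht₀.1.trans hs.1.1, hs.1.2.trans ht.2⟩
  have hScl : IsClosed S :=
    ContinuousOn.preimage_isClosed_of_isClosed
      (hwc.mono (fun s hs => ⟨ht₀.1.trans hs.1, hs.2.trans ht.2⟩)) isClosed_Icc isClosed_Iic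
  have hSne : S.Nonempty := ⟨t, ⟨ht.1, le_rfl⟩, sub_nonpos.mpr hcon⟩
  have hSbdd : BddBelow S := ⟨t₀, fun s hs => hs.1.1⟩
  set τ : ℝ := sInf S with hτ
  have hτS : τ ∈ S := hScl.csInf_mem hSne hSbdd
  have hτ1 : t₀ ≤ τ := hτS.1.1
  have hτ2 : τ ≤ t := hτS.1.2
  have hτw : w τ ≤ 0 := hτS.2
  have hwt₀ : 0 < w t₀ := sub_pos.mpr hinit
  have ht₀τ : t₀ < τ := by
    rcases lt_or_eq_of_le hτ1 with h | h
    · exact h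
    · exfalso; rw [← h] at hτw; linarith
  have hIccsub : Set.Icc t₀ τ ⊆ Set.Icc α β := fun s hs =>
    ⟨ht₀.1.trans hs.1, hs.2.trans (hτ2.trans ht.2)⟩
  have hταβ : τ ∈ Set.Icc α β := hIccsub ⟨hτ1, le_rfl⟩
  -- w > 0 on [t₀, τ)
  have hwpos : ∀ s ∈ Set.Ico t₀ τ, 0 < w s := by
    intro s hs
    by_contra hns
    push_neg at hns
    have hsS : s ∈ S := ⟨⟨hs.1, hs.2.le.trans hτ2⟩, hns⟩
    exact absurd (csInf_le hSbdd hsS) (not_le.mpr hs.2)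
  -- interval integrability of w on subintervals of [α, β]
  have hwint : ∀ s ∈ Set.Icc t₀ τ, IntervalIntegrable w volume s τ := by
    intro s hs
    apply ContinuousOn.intervalIntegrable
    rw [Set.uIcc_of_le hs.2]
    exact hwc.mono fun r hr => hIccsub ⟨hs.1.trans hr.1, hr.2⟩
  -- key integral inequality
  have hkey : ∀ s ∈ Set.Icc t₀ τ, w s ≤ L * ∫ r in s..τ, w r := by
    intro s hs
    have hsαβ : s ∈ Set.Icc α β := hIccsub hs
    have hiup : IntervalIntegrable dup volume s τ := by
      apply IntegrableOn.intervalIntegrable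
      rw [Set.uIcc_of_le hs.2]
      exact hupint.mono_set (Set.Icc_subset_Icc hsαβ.1 hταβ.2)
    have hidum : IntervalIntegrable dum volume s τ := by
      apply IntegrableOn.intervalIntegrable
      rw [Set.uIcc_of_le hs.2]
      exact humint.mono_set (Set.Icc_subset_Icc hsαβ.1 hταβ.2)
    have hiw : IntervalIntegrable (fun r => -L * w r) volume s τ :=
      (hwint s hs).const_mul (-L)
    have hae : ∀ᵐ r ∂(volume.restrict (Set.Icc s τ)),
        (fun r => -L * w r) r ≤ (fun r => dup r - dum r) r := by
      rw [← Measure.restrict_congr_set Ioo_ae_eq_Icc]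
      have hIooSub : Set.Ioo s τ ⊆ Set.Ioo α β :=
        Set.Ioo_subset_Ioo hsαβ.1 (hταβ.2)
      have h2 : ∀ᵐ r ∂(volume.restrict (Set.Ioo s τ)), f r (up r) ≤ dup r :=
        ae_restrict_of_ae_restrict_of_subset hIooSub hupineq
      have h3 : ∀ᵐ r ∂(volume.restrict (Set.Ioo s τ)), dum r ≤ f r (um r) :=
        ae_restrict_of_ae_restrict_of_subset hIooSub humineq
      have h4 : ∀ᵐ r ∂(volume.restrict (Set.Ioo s τ)), r ∈ Set.Ioo s τ :=
        ae_restrict_mem measurableSet_Ioo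
      filter_upwards [h2, h3, h4] with r hr2 hr3 hr4
      have hrαβ : r ∈ Set.Icc α β := Set.Ioo_subset_Icc_self (hIooSub hr4)
      have hrab : r ∈ Set.Ioo a b := hsub hrαβ
      have hupK : up r ∈ K := Or.inl ⟨r, hrαβ, rfl⟩
      have humK : um r ∈ K := Or.inr ⟨r, hrαβ, rfl⟩
      have hwr : 0 < w r := hwpos r ⟨hs.1.trans hr4.1.le, hr4.2⟩
      have hlip := hL r hrab (up r) hupK (um r) humK
      rw [show up r - um r = w r from rfl, abs_of_pos hwr] at hlip
      have h5 := (abs_le.mp hlip).1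
      simp only [hw] at h5 ⊢
      linarith
    have hmono := intervalIntegral.integral_mono_ae_restrict hs.2 hiw (hiup.sub hidum) hae
    have e1 : ∫ r in s..τ, dup r = up τ - up s := by
      rw [hupftc s τ hsαβ.1 hs.2 hταβ.2]; ring
    have e2 : ∫ r in s..τ, dum r = um τ - um s := by
      rw [humftc s τ hsαβ.1 hs.2 hταβ.2]; ring
    have e3 : ∫ r in s..τ, (dup r - dum r) = (up τ - up s) - (um τ - um s) := by
      rw [intervalIntegral.integral_sub hiup hidum, e1, e2]
    have e4 : ∫ r in s..τ, -L * w r = -L * ∫ r in s..τ, w r := by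
      rw [intervalIntegral.integral_const_mul]
    rw [e3, e4] at hmono
    simp only [hw] at hτw hmono ⊢
    linarith
  -- φ(s) = ∫_s^τ w, ψ(s) = exp(L s) φ(s)
  set φ : ℝ → ℝ := fun s => ∫ r in s..τ, w r with hφ
  have hφcont : ContinuousOn φ (Set.Icc t₀ τ) := by
    have hint : IntegrableOn w (Set.uIcc t₀ τ) := by
      rw [Set.uIcc_of_le ht₀τ.le]
      exact (hwc.mono hIccsub).integrableOn_compact isCompact_Icc
    have := intervalIntegral.continuousOn_primitive_interval_left (a := t₀) (b := τ)
      (μ := volume) hint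
    rwa [Set.uIcc_of_le ht₀τ.le] at this
  set ψ : ℝ → ℝ := fun s => Real.exp (L * s) * φ s with hψ
  have hIooIoo : Set.Ioo t₀ τ ⊆ Set.Ioo α β := Set.Ioo_subset_Ioo ht₀.1 hταβ.2
  have hwcIoo : ContinuousOn w (Set.Ioo α β) := hwc.mono Set.Ioo_subset_Icc_self
  have hψderiv : ∀ s ∈ Set.Ioo t₀ τ,
      HasDerivAt ψ (Real.exp (L * s) * L * φ s + Real.exp (L * s) * (-(w s))) s := by
    intro s hsI
    have hsαβ : s ∈ Set.Ioo α β := hIooIoo hsI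
    have hconts : ContinuousAt w s :=
      hwcIoo.continuousAt (isOpen_Ioo.mem_nhds hsαβ)
    have hmeas : StronglyMeasurableAtFilter w (nhds s) volume :=
      hwcIoo.stronglyMeasurableAtFilter isOpen_Ioo s hsαβ
    have hiw : IntervalIntegrable w volume s τ := hwint s ⟨hsI.1.le, hsI.2.le⟩
    have hφs : HasDerivAt φ (-(w s)) s :=
      intervalIntegral.integral_hasDerivAt_left hiw hmeas hconts
    have hls : HasDerivAt (fun s : ℝ => L * s) L s := by
      simpa using (hasDerivAt_id s).const_mul L
    have he : HasDerivAt (fun s : ℝ => Real.exp (L * s)) (Real.exp (L * s) * L) s := hls.exp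
    exact he.mul hφs
  have hψmono : MonotoneOn ψ (Set.Icc t₀ τ) := by
    apply monotoneOn_of_deriv_nonneg (convex_Icc t₀ τ)
    · exact ((Real.continuous_exp.comp (continuous_const.mul continuous_id)).continuousOn).mul
        hφcont
    · intro s hsI
      rw [interior_Icc] at hsI
      exact (hψderiv s hsI).differentiableAt.differentiableWithinAt
    · intro s hsI
      rw [interior_Icc] at hsI
      rw [(hψderiv s hsI).deriv]
      have hkey' := hkey s ⟨hsI.1.le, hsI.2.le⟩
      have hE : 0 < Real.exp (L * s) := Real.exp_pos _
      have : Real.exp (L * s) * L * φ s + Real.exp (L * s) * (-(w s))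
          = Real.exp (L * s) * (L * φ s - w s) := by ring
      rw [this]
      exact mul_nonneg hE.le (by simpa [hφ] using sub_nonneg.mpr hkey')
  have hψτ : ψ τ = 0 := by simp [hψ, hφ, intervalIntegral.integral_same]
  have hφt₀pos : 0 < φ t₀ := by
    apply intervalIntegral.intervalIntegral_pos_of_pos_on (hwint t₀ ⟨le_rfl, ht₀τ.le⟩)
      (fun x hx => hwpos x ⟨hx.1.le, hx.2⟩) ht₀τ
  have hψt₀pos : 0 < ψ t₀ := mul_pos (Real.exp_pos _) hφt₀pos
  have := hψmono ⟨le_rfl, ht₀τ.le⟩ ⟨ht₀τ.le, le_rfl⟩ ht₀τ.le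
  rw [hψτ] at this
  linarith
end

section
/- If u⁺(t₀) ≤ u⁻(t₀) for some t₀ ∈ [α, β], then u⁺(t) ≤ u⁻(t) for all t ∈ [α, t₀]. -/
open MeasureTheory Filter Set

/-!
Let `w = u⁺ - u⁻`. Where `w > 0`, the Lipschitz bound gives `w' ≥ f(t,u⁺) - f(t,u⁻) ≥ -L w`.
If `w(s) > 0` for some `s ≤ t₀`, let `t₁` be the first point of `[s, t₀]` with `w(t₁) ≤ 0`.
Integrating over `[t, t₁]` gives `w(t) ≤ L ∫_t^{t₁} w` on `[s, t₁]`, and the backward integral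
Grönwall inequality (`e^{Lt} ∫_t^{t₁} w` is nondecreasing) forces `w ≤ 0` there, contradicting
`w(s) > 0`.
-/

theorem continuousOn_Icc_of_eq_add_integral {u du : ℝ → ℝ} {α β : ℝ}
    (hdu : IntegrableOn du (Icc α β))
    (hftc : ∀ t ∈ Icc α β, u t = u α + ∫ r in α..t, du r) :
    ContinuousOn u (Icc α β) :=
  ContinuousOn.congr (f := fun t => u α + ∫ r in Ioc α t, du r)
    (continuousOn_const.add (intervalIntegral.continuousOn_primitive hdu)) fun t ht => by
      rw [hftc t ht, intervalIntegral.integral_of_le ht.1]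

theorem nonpos_of_le_mul_integral_right {w : ℝ → ℝ} {s t₁ L : ℝ} (hst : s ≤ t₁) (hL : 0 ≤ L)
    (hw : ContinuousOn w (Icc s t₁)) (hle : ∀ t ∈ Icc s t₁, w t ≤ L * ∫ r in t..t₁, w r) :
    ∀ t ∈ Icc s t₁, w t ≤ 0 := by
  set F : ℝ → ℝ := fun t => ∫ r in t..t₁, w r
  have hwint : IntegrableOn w (uIcc s t₁) := by
    rw [uIcc_of_le hst]; exact hw.integrableOn_Icc
  have hFc : ContinuousOn F (Icc s t₁) := by
    rw [← uIcc_of_le hst]; exact intervalIntegral.continuousOn_primitive_interval_left hwint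
  have hF' : ∀ x ∈ Ioo s t₁, HasDerivAt F (-w x) x := fun x hx =>
    intervalIntegral.integral_hasDerivAt_left
      (hwint.mono_set (by rw [uIcc_of_le hst, uIcc_of_le hx.2.le]; gcongr; exact hx.1.le)
        ).intervalIntegrable
      ((hw.mono Ioo_subset_Icc_self).stronglyMeasurableAtFilter isOpen_Ioo x hx)
      (hw.continuousAt (Icc_mem_nhds hx.1 hx.2))
  have hmono : MonotoneOn (fun t => Real.exp (L * t) * F t) (Icc s t₁) := by
    refine monotoneOn_of_hasDerivWithinAt_nonneg (convex_Icc s t₁)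
      ((Real.continuous_exp.comp (continuous_const_mul L)).continuousOn.mul hFc)
      (f' := fun x => Real.exp (L * x) * (L * F x - w x)) (fun x hx => ?_) (fun x hx => ?_)
    · rw [interior_Icc] at hx
      have hexp : HasDerivAt (fun t => Real.exp (L * t)) (Real.exp (L * x) * L) x := by
        simpa using ((hasDerivAt_id x).const_mul L).exp
      exact ((hexp.mul (hF' x hx)).congr_deriv (by ring)).hasDerivWithinAt
    · rw [interior_Icc] at hx
      have := hle x (Ioo_subset_Icc_self hx)
      exact mul_nonneg (Real.exp_pos _).le (by linarith)
  intro t ht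
  have hFt : F t ≤ 0 := by
    have := hmono ht (right_mem_Icc.2 hst) ht.2
    simp only [F, intervalIntegral.integral_same, mul_zero] at this
    exact nonpos_of_mul_nonpos_right this (Real.exp_pos _)
  exact (hle t ht).trans (mul_nonpos_of_nonneg_of_nonpos hL hFt)

theorem nonpos_of_nonpos_right_of_neg_mul_le_deriv {w dw : ℝ → ℝ} {α t₀ L : ℝ} (hL : 0 ≤ L)
    (hdw : IntegrableOn dw (Icc α t₀))
    (hftc : ∀ s t, α ≤ s → s ≤ t → t ≤ t₀ → w t = w s + ∫ r in s..t, dw r)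
    (hdw_ge : ∀ᵐ r ∂volume.restrict (Icc α t₀), 0 < w r → -L * w r ≤ dw r)
    (hwt₀ : w t₀ ≤ 0) :
    ∀ t ∈ Icc α t₀, w t ≤ 0 := by
  have hwc : ContinuousOn w (Icc α t₀) :=
    continuousOn_Icc_of_eq_add_integral hdw fun t ht => hftc α t le_rfl ht.1 ht.2
  intro s hs
  by_contra! hws
  set S : Set ℝ := Icc s t₀ ∩ w ⁻¹' Iic 0
  have hSne : S.Nonempty := ⟨t₀, right_mem_Icc.2 hs.2, hwt₀⟩
  have hSbdd : BddBelow S := ⟨s, fun x hx => hx.1.1⟩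
  have ht₁S : sInf S ∈ S :=
    ((hwc.mono (Icc_subset_Icc_left hs.1)).preimage_isClosed_of_isClosed isClosed_Icc
      isClosed_Iic).csInf_mem hSne hSbdd
  set t₁ := sInf S
  have hst₁ : s ≤ t₁ := ht₁S.1.1
  have hwpos : ∀ r ∈ Ico s t₁, 0 < w r := fun r hr => by
    by_contra! h
    exact hr.2.not_ge (csInf_le hSbdd ⟨⟨hr.1, hr.2.le.trans ht₁S.1.2⟩, h⟩)
  have hle : ∀ t ∈ Icc s t₁, w t ≤ L * ∫ r in t..t₁, w r := by
    intro t ht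
    have hsub : Icc t t₁ ⊆ Icc α t₀ := Icc_subset_Icc (hs.1.trans ht.1) ht₁S.1.2
    have hineq : ∀ᵐ r ∂volume.restrict (Icc t t₁), -L * w r ≤ dw r := by
      rw [← Measure.restrict_congr_set Ioo_ae_eq_Icc]
      filter_upwards [ae_restrict_of_ae_restrict_of_subset (Ioo_subset_Icc_self.trans hsub) hdw_ge,
        ae_restrict_mem measurableSet_Ioo] with r hr hrI
      exact hr (hwpos r ⟨ht.1.trans hrI.1.le, hrI.2⟩)
    have hint := intervalIntegral.integral_mono_ae_restrict ht.2
      ((hwc.mono (by rwa [uIcc_of_le ht.2])).const_mul (-L)).intervalIntegrable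
      (hdw.mono_set (by rwa [uIcc_of_le ht.2])).intervalIntegrable hineq
    rw [intervalIntegral.integral_const_mul, ← sub_eq_iff_eq_add'.2
      (hftc t t₁ (hs.1.trans ht.1) ht.2 ht₁S.1.2)] at hint
    have hwt₁ : w t₁ ≤ 0 := ht₁S.2
    linarith
  exact (nonpos_of_le_mul_integral_right hst₁ hL (hwc.mono (Icc_subset_Icc hs.1 ht₁S.1.2)) hle
    s (left_mem_Icc.2 hst₁)).not_gt hws

theorem stmt_12_general
    (a b c d : ℝ)
    (f : ℝ → ℝ → ℝ)
    (hflip : ∀ K : Set ℝ, K ⊆ Set.Ioo c d → IsCompact K →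
      ∃ L : ℝ, 0 ≤ L ∧ ∀ t ∈ Set.Ioo a b, ∀ x ∈ K, ∀ y ∈ K, |f t x - f t y| ≤ L * |x - y|)
    (α β : ℝ) (hsub : Set.Icc α β ⊆ Set.Ioo a b)
    -- u⁺ = up, u⁻ = um, with a.e. derivatives dup, dum
    (up um dup dum : ℝ → ℝ)
    (hupmem : ∀ t ∈ Set.Icc α β, up t ∈ Set.Ioo c d)
    (hummem : ∀ t ∈ Set.Icc α β, um t ∈ Set.Ioo c d)
    -- absolute continuity: a.e. differentiability, integrable derivative, FTC
    (hupint : IntegrableOn dup (Set.Icc α β))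
    (humint : IntegrableOn dum (Set.Icc α β))
    (hupftc : ∀ s t : ℝ, α ≤ s → s ≤ t → t ≤ β → up t = up s + ∫ r in s..t, dup r)
    (humftc : ∀ s t : ℝ, α ≤ s → s ≤ t → t ≤ β → um t = um s + ∫ r in s..t, dum r)
    -- differential inequalities, a.e. on (α, β)
    (hupineq : ∀ᵐ t ∂(volume.restrict (Set.Ioo α β)), f t (up t) ≤ dup t)
    (humineq : ∀ᵐ t ∂(volume.restrict (Set.Ioo α β)), dum t ≤ f t (um t))
    (t₀ : ℝ) (ht₀ : t₀ ∈ Set.Icc α β) (hinit : up t₀ ≤ um t₀) :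
    ∀ t ∈ Set.Icc α t₀, up t ≤ um t := by
  have hupc := continuousOn_Icc_of_eq_add_integral hupint fun t ht => hupftc α t le_rfl ht.1 ht.2
  have humc := continuousOn_Icc_of_eq_add_integral humint fun t ht => humftc α t le_rfl ht.1 ht.2
  obtain ⟨L, hL, hLip⟩ := hflip (up '' Icc α β ∪ um '' Icc α β)
    (union_subset (image_subset_iff.2 hupmem) (image_subset_iff.2 hummem))
    ((isCompact_Icc.image_of_continuousOn hupc).union (isCompact_Icc.image_of_continuousOn humc))
  have hsub₀ : Icc α t₀ ⊆ Icc α β := Icc_subset_Icc_right ht₀.2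
  have hdiff_ineq : ∀ᵐ r ∂volume.restrict (Icc α t₀),
      0 < up r - um r → -L * (up r - um r) ≤ dup r - dum r := by
    rw [Measure.restrict_congr_set Ioo_ae_eq_Icc] at hupineq humineq
    filter_upwards [ae_restrict_of_ae_restrict_of_subset hsub₀ hupineq,
      ae_restrict_of_ae_restrict_of_subset hsub₀ humineq, ae_restrict_mem measurableSet_Icc]
      with r hup hum hr hpos
    have hr' := hsub₀ hr
    have := hLip r (hsub hr') (up r) (.inl ⟨r, hr', rfl⟩) (um r) (.inr ⟨r, hr', rfl⟩)
    rw [abs_of_pos hpos] at this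
    linarith [(abs_le.1 this).1]
  have hwftc : ∀ s t, α ≤ s → s ≤ t → t ≤ t₀ →
      up t - um t = up s - um s + ∫ r in s..t, dup r - dum r := by
    intro s t hs hst ht
    have hst' : uIcc s t ⊆ Icc α β := by
      rw [uIcc_of_le hst]; exact Icc_subset_Icc hs (ht.trans ht₀.2)
    rw [hupftc s t hs hst (ht.trans ht₀.2), humftc s t hs hst (ht.trans ht₀.2),
      intervalIntegral.integral_sub (hupint.mono_set hst').intervalIntegrable
        (humint.mono_set hst').intervalIntegrable]
    ring
  intro t ht
  exact sub_nonpos.1 (nonpos_of_nonpos_right_of_neg_mul_le_deriv hL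
    ((hupint.sub humint).mono_set hsub₀) hwftc hdiff_ineq (sub_nonpos.2 hinit) t ht)

/-- comparison principle: if `u⁺(t₀) ≤ u⁻(t₀)` for some `t₀ ∈ [α, β]`,
then `u⁺(t) ≤ u⁻(t)` for all `t ∈ [α, t₀]`. -/
theorem stmt_12
    (a b c d : ℝ) (hab : a < b) (hcd : c < d)
    (f : ℝ → ℝ → ℝ)
    (hfcont : ContinuousOn (fun p : ℝ × ℝ => f p.1 p.2) (Set.Ioo a b ×ˢ Set.Ioo c d))
    (hflip : ∀ K : Set ℝ, K ⊆ Set.Ioo c d → IsCompact K →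
      ∃ L : ℝ, 0 ≤ L ∧ ∀ t ∈ Set.Ioo a b, ∀ x ∈ K, ∀ y ∈ K, |f t x - f t y| ≤ L * |x - y|)
    (α β : ℝ) (hαβ : α ≤ β) (hsub : Set.Icc α β ⊆ Set.Ioo a b)
    -- u⁺ = up, u⁻ = um, with a.e. derivatives dup, dum
    (up um dup dum : ℝ → ℝ)
    (hupmem : ∀ t ∈ Set.Icc α β, up t ∈ Set.Ioo c d)
    (hummem : ∀ t ∈ Set.Icc α β, um t ∈ Set.Ioo c d)
    -- absolute continuity: a.e. differentiability, integrable derivative, FTC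
    (hupderiv : ∀ᵐ t ∂(volume.restrict (Set.Icc α β)), HasDerivAt up (dup t) t)
    (humderiv : ∀ᵐ t ∂(volume.restrict (Set.Icc α β)), HasDerivAt um (dum t) t)
    (hupint : IntegrableOn dup (Set.Icc α β))
    (humint : IntegrableOn dum (Set.Icc α β))
    (hupftc : ∀ s t : ℝ, α ≤ s → s ≤ t → t ≤ β → up t = up s + ∫ r in s..t, dup r)
    (humftc : ∀ s t : ℝ, α ≤ s → s ≤ t → t ≤ β → um t = um s + ∫ r in s..t, dum r)
    -- differential inequalities, a.e. on (α, β)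
    (hupineq : ∀ᵐ t ∂(volume.restrict (Set.Ioo α β)), f t (up t) ≤ dup t)
    (humineq : ∀ᵐ t ∂(volume.restrict (Set.Ioo α β)), dum t ≤ f t (um t))
    (t₀ : ℝ) (ht₀ : t₀ ∈ Set.Icc α β) (hinit : up t₀ ≤ um t₀) :
    ∀ t ∈ Set.Icc α t₀, up t ≤ um t :=
  stmt_12_general a b c d f hflip α β hsub up um dup dum hupmem hummem hupint humint hupftc humftc
    hupineq humineq t₀ ht₀ hinit
end

section
/- Let (S(t))_{t≥0} be a strongly continuous contraction semigroup on B with generator A, let T > 0, and let F : [0,T] × B → B satisfy: (i) for every x ∈ B the map t ↦ F(t,x) is strongly measurable; (ii) for every r > 0 there is L_r ≥ 0 with ‖F(t,x) − F(t,y)‖ ≤ L_r ‖x − y‖ whenever ‖x‖, ‖y‖ ≤ r and t ∈ [0,T]; (iii) there are a', b' ≥ 0 and N ≥ 1 with ⟨Ax + F(t, x+y), x*⟩ ≤ a'(1 + ‖y‖)^N + b'‖x‖ for all t ∈ [0,T], x ∈ D(A), y ∈ B, x* ∈ ∂‖x‖; (iv) there are constants a'', b'', m > 0 such that ⟨F(t,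 y+x) − F(t, y), x*⟩ ≤ a''(1 + ‖y‖)^m − b''‖x‖^m for all t ∈ [0,T], x, y ∈ B, x* ∈ ∂‖x‖, and ‖F(t, y)‖ ≤ a''(1 + ‖y‖)^m for all t ∈ [0,T], y ∈ B. If u, v : [0,T] → B are continuous and u(t) = ∫₀ᵗ S(t−s) F(s, u(s) + v(s)) ds (Bochner integral) for all t ∈ [0,T], then sup_{t ∈ [0,T]} ‖u(t)‖ ≤ (4a''/b'')^{1/m} ( 1 + sup_{t ∈ [0,T]} ‖v(t)‖ ). -/
/-!
Write `f r = F r (u r + v r)`. Restarting the mild equation at `σ` and testing it with a norming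
functional `φ` of `u τ` gives `‖u τ‖ ≤ ‖u σ‖ + ∫_σ^τ φ (S (τ - r) (f r)) dr`. For `r` near `τ` the
functional `φ ∘ S (τ - r)` only almost norms `u τ`; condition (iv), stated for exactly norming
functionals, survives this perturbation by testing it at `z = x + λ (F (y + x) - F y)`. With the
growth bound this gives, for `τ` slightly larger than `σ`,
`‖u τ‖ - ‖u σ‖ ≤ (τ - σ) (2 a'' (1 + sup ‖v‖) ^ m - b'' ‖u τ‖ ^ m + δ)`,
so `‖u‖`, which starts at `0`, can never rise above the level `θ` with
`b'' θ ^ m = 2 a'' (1 + sup ‖v‖) ^ m`, and `θ ≤ (4 a'' / b'') ^ (1 / m) (1 + sup ‖v‖)`.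
-/

open MeasureTheory Filter Set Topology

theorem ContinuousLinearMap.apply_le_of_opNorm_le_one {B : Type*} [NormedAddCommGroup B]
    [NormedSpace ℝ B] {φ : B →L[ℝ] ℝ} (hφ : ‖φ‖ ≤ 1) (x : B) : φ x ≤ ‖x‖ :=
  (Real.le_norm_self _).trans ((φ.le_of_opNorm_le hφ x).trans_eq (one_mul _))

theorem ContinuousLinearMap.sub_le_apply_of_norm_sub_le {B : Type*} [NormedAddCommGroup B]
    [NormedSpace ℝ B] {φ : B →L[ℝ] ℝ} (hφ : ‖φ‖ ≤ 1) {x y : B} (hφx : φ x = ‖x‖) {ε : ℝ}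
    (h : ‖y - x‖ ≤ ε) : ‖x‖ - ε ≤ φ y := by
  have := φ.apply_le_of_opNorm_le_one hφ (x - y)
  rw [map_sub, hφx, norm_sub_rev] at this
  linarith

section Caratheodory

variable {α E F : Type*} [MeasurableSpace α] {μ : Measure α}
  [TopologicalSpace F] [TopologicalSpace.PseudoMetrizableSpace F]

theorem aestronglyMeasurable_apply_simpleFunc {G : α → E → F}
    (hG : ∀ x, AEStronglyMeasurable (fun a => G a x) μ) (s : SimpleFunc α E) :
    AEStronglyMeasurable (fun a => G a (s a)) μ := by
  have hcover : (univ : Set α) = ⋃ x : s.range, s ⁻¹' {(x : E)} := by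
    ext a
    simp
  rw [← Measure.restrict_univ (μ := μ), hcover, aestronglyMeasurable_iUnion_iff]
  rintro ⟨x, -⟩
  refine (hG x).restrict.congr ?_
  filter_upwards [ae_restrict_mem (s.measurableSet_preimage {x})] with a ha
  rw [mem_singleton_iff.1 (mem_preimage.1 ha)]

variable [NormedAddCommGroup E] [NormedSpace ℝ E]

theorem aestronglyMeasurable_comp_of_continuousOn {G : α → E → F} {w : α → E} {R : ℝ}
    (hG : ∀ x, AEStronglyMeasurable (fun a => G a x) μ)
    (hGc : ∀ᵐ a ∂μ, ContinuousOn (G a) (Metric.closedBall 0 R))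
    (hw : AEStronglyMeasurable w μ) (hwR : ∀ᵐ a ∂μ, ‖w a‖ ≤ R) :
    AEStronglyMeasurable (fun a => G a (w a)) μ := by
  set s := hw.stronglyMeasurable_mk.approxBounded R
  refine aestronglyMeasurable_of_tendsto_ae atTop
    (fun n => aestronglyMeasurable_apply_simpleFunc hG (s n)) ?_
  filter_upwards [hGc, hwR, hw.ae_eq_mk] with a hGa hwa hwa'
  have hmk : ‖hw.mk w a‖ ≤ R := hwa' ▸ hwa
  have hR : 0 ≤ R := (norm_nonneg _).trans hwa
  have hs : Tendsto (fun n => s n a) atTop (𝓝[Metric.closedBall 0 R] (hw.mk w a)) :=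
    tendsto_nhdsWithin_iff.2 ⟨StronglyMeasurable.tendsto_approxBounded_of_norm_le _ hmk,
      Eventually.of_forall fun n =>
        mem_closedBall_zero_iff.2 (StronglyMeasurable.norm_approxBounded_le _ hR n a)⟩
  rw [hwa']
  exact ((hGa _ (mem_closedBall_zero_iff.2 hmk)).tendsto).comp hs

end Caratheodory

theorem le_of_forall_eventually_le_add_mul {n : ℝ → ℝ} {a b θ : ℝ}
    (hn : ContinuousOn n (Icc a b)) (ha : n a ≤ θ)
    (hstep : ∀ x ∈ Ico a b, ∀ δ > 0, ∀ᶠ τ in 𝓝[>] x, θ < n τ → n τ ≤ n x + (τ - x) * δ) :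
    ∀ t ∈ Icc a b, n t ≤ θ := by
  have hgrow : ∀ δ > 0, Icc a b ⊆ {t | n t ≤ θ + δ * (t - a)} := by
    intro δ hδ
    refine IsClosed.Icc_subset_of_forall_exists_gt ?_ (by simpa using ha) fun x hx y hy => ?_
    · have hcont : ContinuousOn (fun t => n t - δ * (t - a)) (Icc a b) := hn.sub (by fun_prop)
      convert hcont.preimage_isClosed_of_isClosed isClosed_Icc (isClosed_Iic (a := θ)) using 1
      ext t
      simp [and_comm]
    obtain ⟨τ, hτ, hxτ, hτy⟩ := ((hstep x ⟨hx.2.1, hx.2.2⟩ δ hδ).and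
      (Ioc_mem_nhdsGT (lt_min hy hx.2.2))).exists
    refine ⟨τ, ?_, hxτ, hτy.trans (min_le_left _ _)⟩
    by_cases hθ : θ < n τ
    · have hxθ : n x ≤ θ + δ * (x - a) := hx.1
      show n τ ≤ θ + δ * (τ - a)
      linarith [hτ hθ]
    · have : 0 ≤ δ * (τ - a) := mul_nonneg hδ.le (by linarith [hx.2.1])
      show n τ ≤ θ + δ * (τ - a)
      linarith
  intro t ht
  refine le_of_forall_pos_le_add fun ε hε => ?_
  have hta : 0 ≤ t - a := sub_nonneg.2 ht.1
  calc n t ≤ θ + ε / (t - a + 1) * (t - a) := hgrow _ (by positivity) ht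
    _ ≤ θ + ε := by
      rw [div_mul_eq_mul_div, add_le_add_iff_left, div_le_iff₀ (by positivity)]
      nlinarith

section Semigroup

variable {B : Type*} [NormedAddCommGroup B] [NormedSpace ℝ B]

structure IsContractionSemigroup (S : ℝ → B →L[ℝ] B) : Prop where
  map_zero : S 0 = ContinuousLinearMap.id ℝ B
  map_add : ∀ s ≥ (0:ℝ), ∀ t ≥ (0:ℝ), S (s + t) = (S s).comp (S t)
  norm_le_one : ∀ t ≥ (0:ℝ), ‖S t‖ ≤ 1
  continuousOn_apply : ∀ x : B, ContinuousOn (fun t => S t x) (Ici 0)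

namespace IsContractionSemigroup

variable {S : ℝ → B →L[ℝ] B}

theorem norm_apply_le (hS : IsContractionSemigroup S) {t : ℝ} (ht : 0 ≤ t) (x : B) :
    ‖S t x‖ ≤ ‖x‖ :=
  ((S t).le_of_opNorm_le (hS.norm_le_one t ht) x).trans_eq (one_mul _)

/-- Strong continuity at `0` is locally uniform, by equicontinuity of the contractions. -/
theorem exists_pos_norm_apply_sub_le (hS : IsContractionSemigroup S) (y₀ : B) {ε : ℝ}
    (hε : 0 < ε) : ∃ ρ > 0, ∀ d ∈ Icc 0 ρ, ∀ y : B, ‖y - y₀‖ ≤ ρ → ‖S d y - y‖ ≤ ε := by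
  obtain ⟨ρ₁, hρ₁, hS₁⟩ := Metric.continuousWithinAt_iff.1
    (hS.continuousOn_apply y₀ 0 self_mem_Ici) (ε / 3) (by positivity)
  refine ⟨min (ρ₁ / 2) (ε / 3), by positivity, fun d hd y hy => ?_⟩
  have hdρ : dist d 0 < ρ₁ := by
    rw [Real.dist_0_eq_abs, abs_of_nonneg hd.1]
    linarith [hd.2.trans (min_le_left _ _)]
  have hy₀ : ‖S d y₀ - y₀‖ < ε / 3 := by
    simpa [hS.map_zero, dist_eq_norm] using hS₁ hd.1 hdρ
  have hsplit : S d y - y = S d (y - y₀) + (S d y₀ - y₀) - (y - y₀) := by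
    rw [map_sub]; abel
  calc ‖S d y - y‖ ≤ ‖S d (y - y₀)‖ + ‖S d y₀ - y₀‖ + ‖y - y₀‖ := by
        rw [hsplit]; exact (norm_sub_le _ _).trans (by gcongr; exact norm_add_le _ _)
    _ ≤ ‖y - y₀‖ + ε / 3 + ‖y - y₀‖ := by gcongr; exact hS.norm_apply_le hd.1 _
    _ ≤ ε := by linarith [hy.trans (min_le_right _ _)]

theorem intervalIntegrable_apply (hS : IsContractionSemigroup S) {f : ℝ → B} {a b c M : ℝ}
    (hab : a ≤ b) (hbc : b ≤ c) (hf : AEStronglyMeasurable f (volume.restrict (Ioc a b)))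
    (hfM : ∀ r ∈ Ioc a b, ‖f r‖ ≤ M) :
    IntervalIntegrable (fun r => S (c - r) (f r)) volume a b := by
  have hc : ∀ r ∈ Ioc a b, 0 ≤ c - r := fun r hr => sub_nonneg.2 (hr.2.trans hbc)
  rw [intervalIntegrable_iff_integrableOn_Ioc_of_le hab]
  refine Integrable.of_bound (C := M) ?_ ?_
  · refine aestronglyMeasurable_comp_of_continuousOn (R := M) (fun x => ?_)
      (ae_of_all _ fun r => (S (c - r)).continuous.continuousOn) hf
      (ae_restrict_of_forall_mem measurableSet_Ioc hfM)
    exact ((hS.continuousOn_apply x).comp (continuousOn_const.sub continuousOn_id)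
      hc).aestronglyMeasurable measurableSet_Ioc
  · exact ae_restrict_of_forall_mem measurableSet_Ioc fun r hr =>
      (hS.norm_apply_le (hc r hr) _).trans (hfM r hr)

theorem eventually_forall_norm_sub_le (hS : IsContractionSemigroup S) {u : ℝ → B} {T σ : ℝ}
    (hu : ContinuousOn u (Icc 0 T)) (hσ : σ ∈ Ico 0 T) {ε : ℝ} (hε : 0 < ε) :
    ∀ᶠ τ in 𝓝[>] σ, τ ≤ T ∧ ∀ r ∈ Icc σ τ, ‖S (τ - r) (u τ) - u τ‖ ≤ ε ∧ ‖u r - u τ‖ ≤ ε := by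
  obtain ⟨ρ, hρ, hSρ⟩ := hS.exists_pos_norm_apply_sub_le (u σ) hε
  obtain ⟨ρ', hρ', hu'⟩ := Metric.continuousWithinAt_iff.1 (hu σ (Ico_subset_Icc_self hσ))
    (min ρ (ε / 2)) (by positivity)
  have hlt : σ < min (σ + min ρ ρ') T := lt_min (lt_add_of_pos_right σ (lt_min hρ hρ')) hσ.2
  filter_upwards [Ioo_mem_nhdsGT hlt] with τ hτ
  have hτρ : τ - σ < min ρ ρ' := by linarith [hτ.2.trans_le (min_le_left _ _)]
  have hτT : τ ≤ T := hτ.2.le.trans (min_le_right _ _)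
  have hclose : ∀ r ∈ Icc σ τ, ‖u r - u σ‖ < min ρ (ε / 2) := fun r hr => by
    rw [← dist_eq_norm]
    refine hu' ⟨hσ.1.trans hr.1, hr.2.trans hτT⟩ ?_
    rw [Real.dist_eq, abs_of_nonneg (sub_nonneg.2 hr.1)]
    linarith [min_le_right ρ ρ', hr.2]
  have hτσ := hclose τ ⟨hτ.1.le, le_rfl⟩
  refine ⟨hτT, fun r hr => ⟨hSρ _ ⟨sub_nonneg.2 hr.2, ?_⟩ _ (hτσ.le.trans (min_le_left _ _)), ?_⟩⟩
  · linarith [hr.1, min_le_left ρ ρ']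
  · calc ‖u r - u τ‖ ≤ ‖u r - u σ‖ + ‖u τ - u σ‖ :=
        (norm_sub_le_norm_sub_add_norm_sub _ (u σ) _).trans_eq (by rw [norm_sub_rev (u σ)])
      _ ≤ ε := by linarith [hclose r hr, min_le_right ρ (ε / 2), hτσ]

variable [CompleteSpace B] {f u : ℝ → B} {T M σ τ : ℝ}

theorem mild_eq_apply_add_integral (hS : IsContractionSemigroup S)
    (hf : AEStronglyMeasurable f (volume.restrict (Icc 0 T))) (hfM : ∀ r ∈ Icc 0 T, ‖f r‖ ≤ M)
    (hu : ∀ t ∈ Icc 0 T, u t = ∫ s in (0:ℝ)..t, S (t - s) (f s))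
    (hσ : 0 ≤ σ) (hστ : σ ≤ τ) (hτ : τ ≤ T) :
    u τ = S (τ - σ) (u σ) + ∫ r in σ..τ, S (τ - r) (f r) := by
  have hint : ∀ a b c, 0 ≤ a → a ≤ b → b ≤ τ → b ≤ c →
      IntervalIntegrable (fun r => S (c - r) (f r)) volume a b := fun a b c ha hab hbτ hbc =>
    have hsub : Ioc a b ⊆ Icc 0 T := fun r hr => ⟨ha.trans hr.1.le, hr.2.trans (hbτ.trans hτ)⟩
    hS.intervalIntegrable_apply hab hbc (hf.mono_set hsub) fun r hr => hfM r (hsub hr)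
  have hhead : ∫ r in (0:ℝ)..σ, S (τ - r) (f r) = S (τ - σ) (u σ) := by
    have hsplit : EqOn (fun r => S (τ - r) (f r)) (fun r => S (τ - σ) (S (σ - r) (f r)))
        (uIcc 0 σ) := fun r hr => by
      rw [uIcc_of_le hσ] at hr
      simp only
      rw [show τ - r = (τ - σ) + (σ - r) by ring,
        hS.map_add (τ - σ) (sub_nonneg.2 hστ) (σ - r) (sub_nonneg.2 hr.2),
        ContinuousLinearMap.comp_apply]
    rw [intervalIntegral.integral_congr hsplit,
      (S (τ - σ)).intervalIntegral_comp_comm (hint 0 σ σ le_rfl hσ hστ le_rfl),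
      ← hu σ ⟨hσ, hστ.trans hτ⟩]
  rw [hu τ ⟨hσ.trans hστ, hτ⟩, ← intervalIntegral.integral_add_adjacent_intervals
    (hint 0 σ τ le_rfl hσ hστ hστ) (hint σ τ τ hσ hστ le_rfl le_rfl), hhead]

theorem norm_le_add_mul_of_apply_le (hS : IsContractionSemigroup S)
    (hf : AEStronglyMeasurable f (volume.restrict (Icc 0 T))) (hfM : ∀ r ∈ Icc 0 T, ‖f r‖ ≤ M)
    (hu : ∀ t ∈ Icc 0 T, u t = ∫ s in (0:ℝ)..t, S (t - s) (f s))
    (hσ : 0 ≤ σ) (hστ : σ ≤ τ) (hτ : τ ≤ T) {φ : B →L[ℝ] ℝ} (hφ : ‖φ‖ ≤ 1)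
    (hφu : φ (u τ) = ‖u τ‖) {K : ℝ} (hK : ∀ r ∈ Icc σ τ, φ (S (τ - r) (f r)) ≤ K) :
    ‖u τ‖ ≤ ‖u σ‖ + (τ - σ) * K := by
  have hsub : Ioc σ τ ⊆ Icc 0 T := fun r hr => ⟨hσ.trans hr.1.le, hr.2.trans hτ⟩
  have hint : IntervalIntegrable (fun r => S (τ - r) (f r)) volume σ τ :=
    hS.intervalIntegrable_apply hστ le_rfl (hf.mono_set hsub) fun r hr => hfM r (hsub hr)
  have hhead : φ (S (τ - σ) (u σ)) ≤ ‖u σ‖ :=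
    (φ.apply_le_of_opNorm_le_one hφ _).trans (hS.norm_apply_le (sub_nonneg.2 hστ) _)
  have htail : φ (∫ r in σ..τ, S (τ - r) (f r)) ≤ (τ - σ) * K := by
    rw [← φ.intervalIntegral_comp_comm hint]
    calc ∫ r in σ..τ, φ (S (τ - r) (f r)) ≤ ∫ _ in σ..τ, K :=
          intervalIntegral.integral_mono_on hστ ⟨φ.integrable_comp hint.1, φ.integrable_comp hint.2⟩
            intervalIntegrable_const hK
      _ = (τ - σ) * K := by rw [intervalIntegral.integral_const, smul_eq_mul]
  rw [← hφu, hS.mild_eq_apply_add_integral hf hfM hu hσ hστ hτ, _root_.map_add]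
  exact add_le_add hhead htail

end IsContractionSemigroup

end Semigroup

section Dissipative

variable {B : Type*} [NormedAddCommGroup B] [NormedSpace ℝ B]

/-- Test `g` at `z = x + l • g x` against a norming functional of `z` and compare with
`ψ z ≤ ‖z‖`. -/
theorem apply_le_of_forall_norming {g : B → B} {p : B → ℝ}
    (hg : ∀ z (φ : B →L[ℝ] ℝ), ‖φ‖ = 1 → φ z = ‖z‖ → φ (g z) ≤ p z) (hp0 : 0 ≤ p 0)
    (x : B) {l : ℝ} (hl : 0 < l) {ψ : B →L[ℝ] ℝ} (hψ : ‖ψ‖ ≤ 1) :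
    ψ (g x) ≤ p (x + l • g x) + ‖g x - g (x + l • g x)‖ + (‖x‖ - ψ x) / l := by
  set z := x + l • g x
  have hz : ‖z‖ ≤ ‖x‖ + l * (p z + ‖g x - g z‖) := by
    rcases eq_or_ne z 0 with hz0 | hz0
    · rw [hz0, norm_zero]
      positivity
    obtain ⟨φ, hφ, hφz⟩ := exists_dual_vector ℝ z (norm_ne_zero_iff.2 hz0)
    replace hφz : φ z = ‖z‖ := by exact_mod_cast hφz
    calc ‖z‖ = φ x + l * (φ (g z) + φ (g x - g z)) := by
          rw [← hφz, map_add, map_smul, map_sub, smul_eq_mul]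
          ring
      _ ≤ ‖x‖ + l * (p z + ‖g x - g z‖) := by
          gcongr
          · exact φ.apply_le_of_opNorm_le_one hφ.le x
          · exact hg z φ hφ hφz
          · exact φ.apply_le_of_opNorm_le_one hφ.le _
  have hψz : ψ x + l * ψ (g x) ≤ ‖z‖ := by
    simpa [z] using ψ.apply_le_of_opNorm_le_one hψ z
  rw [← sub_le_iff_le_add', le_div_iff₀ hl]
  linarith

theorem exists_pos_apply_le_of_forall_norming {C W L b m δ : ℝ} (hW : 0 ≤ W) (hL : 0 ≤ L)
    (hm : 0 < m) (hδ : 0 < δ) :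
    ∃ ε > 0, ∀ (g : B → B) (c : ℝ), 0 ≤ c →
      (∀ z (φ : B →L[ℝ] ℝ), ‖φ‖ = 1 → φ z = ‖z‖ → φ (g z) ≤ c - b * ‖z‖ ^ m) →
      (∀ x, ‖x‖ ≤ C → ‖g x‖ ≤ W) →
      (∀ x z, ‖x‖ ≤ C + W → ‖z‖ ≤ C + W → ‖g x - g z‖ ≤ L * ‖x - z‖) →
      ∀ x (ψ : B →L[ℝ] ℝ), ‖x‖ ≤ C → ‖ψ‖ ≤ 1 → ‖x‖ - ε ≤ ψ x →
        ψ (g x) ≤ c - b * ‖x‖ ^ m + δ := by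
  have hcont : ContinuousOn (fun s : ℝ => b * s ^ m) (Icc 0 (C + W)) := fun s _ =>
    (continuousAt_const.mul (Real.continuousAt_rpow_const s m (Or.inr hm.le))).continuousWithinAt
  obtain ⟨η, hη, hηs⟩ := Metric.uniformContinuousOn_iff.1
    (isCompact_Icc.uniformContinuousOn_of_continuous hcont) (δ / 3) (by positivity)
  set l := min 1 (min (η / (W + 1)) (δ / (3 * (L * W + 1))))
  have hl : 0 < l := lt_min one_pos (lt_min (by positivity) (by positivity))
  refine ⟨l * (δ / 3), by positivity, fun g c hc hg hgW hgL x ψ hx hψ hψx => ?_⟩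
  set z := x + l • g x
  have hxz : ‖x - z‖ ≤ l * W := by
    rw [show x - z = -(l • g x) by simp [z], norm_neg, norm_smul, Real.norm_of_nonneg hl.le]
    exact mul_le_mul_of_nonneg_left (hgW x hx) hl.le
  have hlW : l * W ≤ W := mul_le_of_le_one_left hW (min_le_left _ _)
  have hz : ‖z‖ ≤ C + W := by
    have := norm_le_norm_add_norm_sub' z x
    rw [norm_sub_rev] at this
    linarith
  have hLip : ‖g x - g z‖ ≤ δ / 3 := calc
    ‖g x - g z‖ ≤ L * (l * W) := (hgL x z (by linarith) hz).trans (by gcongr)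
    _ ≤ l * (L * W + 1) := by linarith [hl.le]
    _ ≤ δ / 3 := by
      rw [← le_div_iff₀ (by positivity), div_div]
      exact (min_le_right _ _).trans (min_le_right _ _)
  have hpow : b * ‖x‖ ^ m - b * ‖z‖ ^ m ≤ δ / 3 := by
    refine (le_abs_self _).trans (hηs _ ⟨norm_nonneg x, by linarith⟩ _ ⟨norm_nonneg z, hz⟩ ?_).le
    calc dist ‖x‖ ‖z‖ ≤ ‖x - z‖ := dist_norm_norm_le x z
      _ ≤ η / (W + 1) * W := hxz.trans (by gcongr; exact (min_le_right _ _).trans (min_le_left _ _))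
      _ < η := by rw [div_mul_eq_mul_div, div_lt_iff₀ (by positivity)]; nlinarith
  have hnear : (‖x‖ - ψ x) / l ≤ δ / 3 := by
    rw [div_le_iff₀ hl]
    linarith
  have := apply_le_of_forall_norming hg (by simpa [Real.zero_rpow hm.ne'] using hc) x hl hψ
  linarith

end Dissipative

section Nonlinearity

variable {B : Type*} [NormedAddCommGroup B] [NormedSpace ℝ B] {F : ℝ → B → B} {T a'' b'' m : ℝ}

theorem aestronglyMeasurable_apply_of_lipschitz
    (hFmeas : ∀ x : B, AEStronglyMeasurable (fun t => F t x) (volume.restrict (Icc 0 T)))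
    (hFlip : ∀ r : ℝ, 0 < r → ∃ L : ℝ, 0 ≤ L ∧ ∀ t ∈ Icc 0 T, ∀ x y : B,
      ‖x‖ ≤ r → ‖y‖ ≤ r → ‖F t x - F t y‖ ≤ L * ‖x - y‖)
    {w : ℝ → B} (hw : ContinuousOn w (Icc 0 T)) :
    AEStronglyMeasurable (fun t => F t (w t)) (volume.restrict (Icc 0 T)) := by
  obtain ⟨R, hR⟩ := isCompact_Icc.exists_bound_of_continuousOn hw
  obtain ⟨L, -, hL⟩ := hFlip (|R| + 1) (by positivity)
  refine aestronglyMeasurable_comp_of_continuousOn (R := |R| + 1) hFmeas ?_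
    (hw.aestronglyMeasurable measurableSet_Icc) (ae_restrict_of_forall_mem measurableSet_Icc
      fun t ht => (hR t ht).trans (by linarith [le_abs_self R]))
  filter_upwards [ae_restrict_mem measurableSet_Icc] with t ht
  refine (LipschitzOnWith.of_dist_le' (K := L) fun x hx y hy => ?_).continuousOn
  rw [dist_eq_norm, dist_eq_norm]
  exact hL t ht x y (mem_closedBall_zero_iff.1 hx) (mem_closedBall_zero_iff.1 hy)

theorem exists_pos_apply_le_of_dissipative
    (hFlip : ∀ r : ℝ, 0 < r → ∃ L : ℝ, 0 ≤ L ∧ ∀ t ∈ Icc 0 T, ∀ x y : B,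
      ‖x‖ ≤ r → ‖y‖ ≤ r → ‖F t x - F t y‖ ≤ L * ‖x - y‖)
    (ha'' : 0 ≤ a'') (hm : 0 < m)
    (hdiss2 : ∀ t ∈ Icc 0 T, ∀ x y : B, ∀ φ : B →L[ℝ] ℝ, ‖φ‖ = 1 → φ x = ‖x‖ →
      φ (F t (y + x) - F t y) ≤ a'' * (1 + ‖y‖) ^ m - b'' * ‖x‖ ^ m)
    (hFgrowth : ∀ t ∈ Icc 0 T, ∀ y : B, ‖F t y‖ ≤ a'' * (1 + ‖y‖) ^ m)
    {C δ : ℝ} (hC : 0 ≤ C) (hδ : 0 < δ) :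
    ∃ ε > 0, ∀ t ∈ Icc 0 T, ∀ x y w : B, ∀ ψ : B →L[ℝ] ℝ,
      ‖x‖ ≤ C → ‖y‖ ≤ C → ‖ψ‖ ≤ 1 → ‖x‖ - ε ≤ ψ x →
        ψ (F t w) ≤ 2 * a'' * (1 + ‖y‖) ^ m - b'' * ‖x‖ ^ m + δ + ‖F t w - F t (y + x)‖ := by
  set W := 2 * a'' * (1 + 2 * C) ^ m
  obtain ⟨L, hL0, hL⟩ := hFlip (2 * C + W + 1) (by positivity)
  obtain ⟨ε, hε, hA⟩ := exists_pos_apply_le_of_forall_norming (B := B) (C := C) (b := b'')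
    (by positivity : 0 ≤ W) hL0 hm hδ
  refine ⟨ε, hε, fun t ht x y w ψ hx hy hψ hψx => ?_⟩
  have hgW : ∀ z : B, ‖z‖ ≤ C → ‖F t (y + z) - F t y‖ ≤ W := fun z hz => calc
    ‖F t (y + z) - F t y‖ ≤ a'' * (1 + ‖y + z‖) ^ m + a'' * (1 + ‖y‖) ^ m :=
      (norm_sub_le _ _).trans (add_le_add (hFgrowth t ht _) (hFgrowth t ht _))
    _ ≤ a'' * (1 + 2 * C) ^ m + a'' * (1 + 2 * C) ^ m := by
      have := norm_add_le y z
      gcongr <;> linarith [norm_nonneg z]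
    _ = W := by ring
  have hgL : ∀ z z' : B, ‖z‖ ≤ C + W → ‖z'‖ ≤ C + W →
      ‖(F t (y + z) - F t y) - (F t (y + z') - F t y)‖ ≤ L * ‖z - z'‖ := fun z z' hz hz' => by
    rw [sub_sub_sub_cancel_right, ← add_sub_add_left_eq_sub z z' y]
    exact hL t ht _ _ (by linarith [norm_add_le y z]) (by linarith [norm_add_le y z'])
  have hmain := hA (fun z => F t (y + z) - F t y) (a'' * (1 + ‖y‖) ^ m) (by positivity)
    (fun z φ hφ hφz => hdiss2 t ht z y φ hφ hφz) hgW hgL x ψ hx hψ hψx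
  have hgrowth := (ψ.apply_le_of_opNorm_le_one hψ _).trans (hFgrowth t ht y)
  have hrest := ψ.apply_le_of_opNorm_le_one hψ (F t w - F t (y + x))
  simp only [map_sub] at hmain hrest
  linarith

theorem exists_pos_apply_semigroup_le {S : ℝ → B →L[ℝ] B} (hS : IsContractionSemigroup S)
    (hFlip : ∀ r : ℝ, 0 < r → ∃ L : ℝ, 0 ≤ L ∧ ∀ t ∈ Icc 0 T, ∀ x y : B,
      ‖x‖ ≤ r → ‖y‖ ≤ r → ‖F t x - F t y‖ ≤ L * ‖x - y‖)
    (ha'' : 0 ≤ a'') (hm : 0 < m)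
    (hdiss2 : ∀ t ∈ Icc 0 T, ∀ x y : B, ∀ φ : B →L[ℝ] ℝ, ‖φ‖ = 1 → φ x = ‖x‖ →
      φ (F t (y + x) - F t y) ≤ a'' * (1 + ‖y‖) ^ m - b'' * ‖x‖ ^ m)
    (hFgrowth : ∀ t ∈ Icc 0 T, ∀ y : B, ‖F t y‖ ≤ a'' * (1 + ‖y‖) ^ m)
    {u v : ℝ → B} {Ku Kv δ : ℝ} (hKu0 : 0 ≤ Ku) (hKu : ∀ t ∈ Icc 0 T, ‖u t‖ ≤ Ku)
    (hKv0 : 0 ≤ Kv) (hKv : ∀ t ∈ Icc 0 T, ‖v t‖ ≤ Kv) (hδ : 0 < δ) :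
    ∃ η > 0, ∀ τ ∈ Icc 0 T, ∀ r ∈ Icc 0 T, ∀ d ≥ 0, ∀ φ : B →L[ℝ] ℝ,
      ‖φ‖ ≤ 1 → φ (u τ) = ‖u τ‖ → ‖S d (u τ) - u τ‖ ≤ η → ‖u r - u τ‖ ≤ η →
        φ (S d (F r (u r + v r))) ≤ 2 * a'' * (1 + Kv) ^ m - b'' * ‖u τ‖ ^ m + δ := by
  obtain ⟨ε, hε, hFε⟩ := exists_pos_apply_le_of_dissipative hFlip ha'' hm hdiss2 hFgrowth
    (add_nonneg hKu0 hKv0) (half_pos hδ)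
  obtain ⟨L, hL0, hL⟩ := hFlip (Ku + Kv + 1) (by positivity)
  refine ⟨min ε (δ / (2 * (L + 1))), by positivity,
    fun τ hτ r hr d hd φ hφ hφu hSd hur => ?_⟩
  have hψ : ‖φ.comp (S d)‖ ≤ 1 := (φ.opNorm_comp_le _).trans
    (mul_le_one₀ hφ (norm_nonneg _) (hS.norm_le_one d hd))
  have hnear : ‖u τ‖ - ε ≤ φ.comp (S d) (u τ) :=
    φ.sub_le_apply_of_norm_sub_le hφ hφu (hSd.trans (min_le_left _ _))
  have hLip : ‖F r (u r + v r) - F r (v r + u τ)‖ ≤ δ / 2 := calc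
    _ ≤ L * ‖u r - u τ‖ := by
      rw [add_comm (v r)]
      simpa only [add_sub_add_right_eq_sub] using hL r hr (u r + v r) (u τ + v r)
        (by linarith [norm_add_le (u r) (v r), hKu r hr, hKv r hr])
        (by linarith [norm_add_le (u τ) (v r), hKu τ hτ, hKv r hr])
    _ ≤ (L + 1) * (δ / (2 * (L + 1))) :=
      mul_le_mul (by linarith) (hur.trans (min_le_right _ _)) (norm_nonneg _) (by linarith)
    _ = δ / 2 := by field_simp
  have hv : 2 * a'' * (1 + ‖v r‖) ^ m ≤ 2 * a'' * (1 + Kv) ^ m := by gcongr; exact hKv r hr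
  have := hFε r hr (u τ) (v r) (u r + v r) _ (hKu τ hτ |>.trans (le_add_of_nonneg_right hKv0))
    (hKv r hr |>.trans (le_add_of_nonneg_left hKu0)) hψ hnear
  rw [ContinuousLinearMap.comp_apply] at this
  linarith

theorem eventually_norm_mild_le [CompleteSpace B] {S : ℝ → B →L[ℝ] B}
    (hS : IsContractionSemigroup S)
    (hFmeas : ∀ x : B, AEStronglyMeasurable (fun t => F t x) (volume.restrict (Icc 0 T)))
    (hFlip : ∀ r : ℝ, 0 < r → ∃ L : ℝ, 0 ≤ L ∧ ∀ t ∈ Icc 0 T, ∀ x y : B,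
      ‖x‖ ≤ r → ‖y‖ ≤ r → ‖F t x - F t y‖ ≤ L * ‖x - y‖)
    (ha'' : 0 ≤ a'') (hm : 0 < m)
    (hdiss2 : ∀ t ∈ Icc 0 T, ∀ x y : B, ∀ φ : B →L[ℝ] ℝ, ‖φ‖ = 1 → φ x = ‖x‖ →
      φ (F t (y + x) - F t y) ≤ a'' * (1 + ‖y‖) ^ m - b'' * ‖x‖ ^ m)
    (hFgrowth : ∀ t ∈ Icc 0 T, ∀ y : B, ‖F t y‖ ≤ a'' * (1 + ‖y‖) ^ m)
    {u v : ℝ → B} (hucont : ContinuousOn u (Icc 0 T)) (hvcont : ContinuousOn v (Icc 0 T))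
    (hueq : ∀ t ∈ Icc 0 T, u t = ∫ s in (0:ℝ)..t, S (t - s) (F s (u s + v s)))
    {Kv : ℝ} (hKv : ∀ t ∈ Icc 0 T, ‖v t‖ ≤ Kv) {σ δ : ℝ} (hσ : σ ∈ Ico 0 T) (hδ : 0 < δ) :
    ∀ᶠ τ in 𝓝[>] σ,
      ‖u τ‖ ≤ ‖u σ‖ + (τ - σ) * (2 * a'' * (1 + Kv) ^ m - b'' * ‖u τ‖ ^ m + δ) := by
  obtain ⟨Ku, hKu⟩ := isCompact_Icc.exists_bound_of_continuousOn hucont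
  have hKu0 : 0 ≤ Ku := (norm_nonneg _).trans (hKu σ (Ico_subset_Icc_self hσ))
  have hKv0 : 0 ≤ Kv := (norm_nonneg _).trans (hKv σ (Ico_subset_Icc_self hσ))
  obtain ⟨η, hη, hpt⟩ := exists_pos_apply_semigroup_le hS hFlip ha'' hm hdiss2 hFgrowth
    hKu0 hKu hKv0 hKv hδ
  have hfM : ∀ r ∈ Icc 0 T, ‖F r (u r + v r)‖ ≤ a'' * (1 + (Ku + Kv)) ^ m := fun r hr =>
    (hFgrowth r hr _).trans (by
      gcongr
      exact (norm_add_le _ _).trans (add_le_add (hKu r hr) (hKv r hr)))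
  filter_upwards [hS.eventually_forall_norm_sub_le hucont hσ hη, self_mem_nhdsWithin]
    with τ ⟨hτT, hclose⟩ hστ
  have hτ : τ ∈ Icc 0 T := ⟨hσ.1.trans hστ.le, hτT⟩
  obtain ⟨φ, hφ, hφu⟩ := exists_dual_vector'' ℝ (u τ)
  replace hφu : φ (u τ) = ‖u τ‖ := by exact_mod_cast hφu
  exact hS.norm_le_add_mul_of_apply_le (aestronglyMeasurable_apply_of_lipschitz hFmeas hFlip
    (hucont.add hvcont)) hfM hueq hσ.1 hστ.le hτT hφ hφu fun r hr =>
    hpt τ hτ r ⟨hσ.1.trans hr.1, hr.2.trans hτT⟩ (τ - r) (sub_nonneg.2 hr.2) φ hφ hφu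
      (hclose r hr).1 (hclose r hr).2

end Nonlinearity

theorem stmt_14_general
    {B : Type*} [NormedAddCommGroup B] [NormedSpace ℝ B] [CompleteSpace B]
    -- (S(t))_{t ≥ 0} a strongly continuous contraction semigroup on B
    (S : ℝ → B →L[ℝ] B)
    (hS0 : S 0 = ContinuousLinearMap.id ℝ B)
    (hSadd : ∀ s ≥ (0:ℝ), ∀ t ≥ (0:ℝ), S (s + t) = (S s).comp (S t))
    (hScontr : ∀ t ≥ (0:ℝ), ‖S t‖ ≤ 1)
    (hScont : ∀ x : B, ContinuousOn (fun t => S t x) (Set.Ici 0))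
    (T : ℝ) (hT : 0 < T)
    (F : ℝ → B → B)
    -- (i) strong measurability
    (hFmeas : ∀ x : B, AEStronglyMeasurable (fun t => F t x) (volume.restrict (Set.Icc 0 T)))
    -- (ii) local Lipschitz continuity
    (hFlip : ∀ r : ℝ, 0 < r → ∃ L : ℝ, 0 ≤ L ∧ ∀ t ∈ Set.Icc 0 T, ∀ x y : B,
      ‖x‖ ≤ r → ‖y‖ ≤ r → ‖F t x - F t y‖ ≤ L * ‖x - y‖)
    -- (iv) the (F″) conditions
    (a'' b'' m : ℝ) (ha'' : 0 < a'') (hb'' : 0 < b'') (hm : 0 < m)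
    (hdiss2 : ∀ t ∈ Set.Icc 0 T, ∀ x y : B, ∀ φ : B →L[ℝ] ℝ,
      ‖φ‖ = 1 → φ x = ‖x‖ →
        φ (F t (y + x) - F t y) ≤ a'' * (1 + ‖y‖) ^ m - b'' * ‖x‖ ^ m)
    (hFgrowth : ∀ t ∈ Set.Icc 0 T, ∀ y : B, ‖F t y‖ ≤ a'' * (1 + ‖y‖) ^ m)
    (u v : ℝ → B)
    (hucont : ContinuousOn u (Set.Icc 0 T)) (hvcont : ContinuousOn v (Set.Icc 0 T))
    (hueq : ∀ t ∈ Set.Icc 0 T, u t = ∫ s in (0:ℝ)..t, S (t - s) (F s (u s + v s))) :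
    ⨆ t : Set.Icc (0:ℝ) T, ‖u (t : ℝ)‖ ≤
      (4 * a'' / b'') ^ (1 / m) * (1 + ⨆ t : Set.Icc (0:ℝ) T, ‖v (t : ℝ)‖) := by
  have hS : IsContractionSemigroup S := ⟨hS0, hSadd, hScontr, hScont⟩
  have h0 : (0:ℝ) ∈ Icc 0 T := left_mem_Icc.2 hT.le
  have : Nonempty (Icc (0:ℝ) T) := ⟨⟨0, h0⟩⟩
  obtain ⟨R, hR⟩ := isCompact_Icc.exists_bound_of_continuousOn hvcont
  set Kv := ⨆ t : Icc (0:ℝ) T, ‖v t‖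
  have hKv : ∀ t ∈ Icc 0 T, ‖v t‖ ≤ Kv := fun t ht =>
    le_ciSup (f := fun t : Icc (0:ℝ) T => ‖v t‖) ⟨R, by rintro _ ⟨s, rfl⟩; exact hR s s.2⟩ ⟨t, ht⟩
  have hKv0 : 0 ≤ Kv := (norm_nonneg _).trans (hKv 0 h0)
  set θ := (2 * a'' / b'') ^ (1 / m) * (1 + Kv)
  have hθ : b'' * θ ^ m = 2 * a'' * (1 + Kv) ^ m := by
    rw [Real.mul_rpow (by positivity) (by positivity), ← Real.rpow_mul (by positivity),
      one_div_mul_cancel hm.ne', Real.rpow_one]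
    field_simp
  have hbound : ∀ t ∈ Icc 0 T, ‖u t‖ ≤ θ := by
    refine le_of_forall_eventually_le_add_mul hucont.norm (by simp [hueq 0 h0]; positivity)
      fun σ hσ δ hδ => ?_
    filter_upwards [eventually_norm_mild_le hS hFmeas hFlip ha''.le hm hdiss2 hFgrowth hucont
      hvcont hueq hKv hσ hδ, self_mem_nhdsWithin] with τ hτ hστ hθτ
    have hdecay : 2 * a'' * (1 + Kv) ^ m - b'' * ‖u τ‖ ^ m ≤ 0 := by
      rw [← hθ, sub_nonpos]
      gcongr
    nlinarith [mem_Ioi.1 hστ]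
  refine ciSup_le fun t => (hbound t t.2).trans ?_
  exact mul_le_mul_of_nonneg_right
    (Real.rpow_le_rpow (by positivity) (by gcongr; linarith) (by positivity)) (by linarith)

/-- dissipative bound, Lemma 3.8 of the paper. -/
theorem stmt_14
    {B : Type*} [NormedAddCommGroup B] [NormedSpace ℝ B] [CompleteSpace B]
    -- (S(t))_{t ≥ 0} a strongly continuous contraction semigroup on B
    (S : ℝ → B →L[ℝ] B)
    (hS0 : S 0 = ContinuousLinearMap.id ℝ B)
    (hSadd : ∀ s ≥ (0:ℝ), ∀ t ≥ (0:ℝ), S (s + t) = (S s).comp (S t))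
    (hScontr : ∀ t ≥ (0:ℝ), ‖S t‖ ≤ 1)
    (hScont : ∀ x : B, ContinuousOn (fun t => S t x) (Set.Ici 0))
    -- the generator A with domain Adom
    (Adom : Set B) (A : B → B)
    (hAdom : ∀ x : B, x ∈ Adom ↔
      ∃ y : B, Tendsto (fun h : ℝ => h⁻¹ • (S h x - x)) (nhdsWithin 0 (Set.Ioi 0)) (nhds y))
    (hA : ∀ x ∈ Adom,
      Tendsto (fun h : ℝ => h⁻¹ • (S h x - x)) (nhdsWithin 0 (Set.Ioi 0)) (nhds (A x)))
    (T : ℝ) (hT : 0 < T)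
    (F : ℝ → B → B)
    -- (i) strong measurability
    (hFmeas : ∀ x : B, AEStronglyMeasurable (fun t => F t x) (volume.restrict (Set.Icc 0 T)))
    -- (ii) local Lipschitz continuity
    (hFlip : ∀ r : ℝ, 0 < r → ∃ L : ℝ, 0 ≤ L ∧ ∀ t ∈ Set.Icc 0 T, ∀ x y : B,
      ‖x‖ ≤ r → ‖y‖ ≤ r → ‖F t x - F t y‖ ≤ L * ‖x - y‖)
    -- (iii) the (F′) dissipativity-type estimate, with x* ∈ ∂‖x‖
    (a' b' N : ℝ) (ha' : 0 ≤ a') (hb' : 0 ≤ b') (hN : 1 ≤ N)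
    (hdiss : ∀ t ∈ Set.Icc 0 T, ∀ x ∈ Adom, ∀ y : B, ∀ φ : B →L[ℝ] ℝ,
      ‖φ‖ = 1 → φ x = ‖x‖ → φ (A x + F t (x + y)) ≤ a' * (1 + ‖y‖) ^ N + b' * ‖x‖)
    -- (iv) the (F″) conditions
    (a'' b'' m : ℝ) (ha'' : 0 < a'') (hb'' : 0 < b'') (hm : 0 < m)
    (hdiss2 : ∀ t ∈ Set.Icc 0 T, ∀ x y : B, ∀ φ : B →L[ℝ] ℝ,
      ‖φ‖ = 1 → φ x = ‖x‖ →
        φ (F t (y + x) - F t y) ≤ a'' * (1 + ‖y‖) ^ m - b'' * ‖x‖ ^ m)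
    (hFgrowth : ∀ t ∈ Set.Icc 0 T, ∀ y : B, ‖F t y‖ ≤ a'' * (1 + ‖y‖) ^ m)
    (u v : ℝ → B)
    (hucont : ContinuousOn u (Set.Icc 0 T)) (hvcont : ContinuousOn v (Set.Icc 0 T))
    (hueq : ∀ t ∈ Set.Icc 0 T, u t = ∫ s in (0:ℝ)..t, S (t - s) (F s (u s + v s))) :
    ⨆ t : Set.Icc (0:ℝ) T, ‖u (t : ℝ)‖ ≤
      (4 * a'' / b'') ^ (1 / m) * (1 + ⨆ t : Set.Icc (0:ℝ) T, ‖v (t : ℝ)‖) :=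
  stmt_14_general S hS0 hSadd hScontr hScont T hT F hFmeas hFlip a'' b'' m ha'' hb'' hm hdiss2
    hFgrowth u v hucont hvcont hueq
end

section
/- Let D ⊆ B be a linear subspace and A : D → B a linear map that is dissipative, i.e., ⟨Ax, x*⟩ ≤ 0 for all x ∈ D and x* ∈ ∂‖x‖. Let T > 0, F : [0,T] × B → B, and suppose there are constants a', b' ≥ 0 and N ≥ 1 such that ⟨Ax + F(t, x+y), x*⟩ ≤ a'(1 + ‖y‖)^N + b'‖x‖ for all t ∈ [0,T], x ∈ D, y ∈ B and x* ∈ ∂‖x‖. For an integer n ≥ 1 define F_n(t, x) := F(t, x) if ‖x‖ ≤ n and F_n(t, x) := F(t, n x / ‖x‖) if ‖x‖ > n. Then ⟨Ax + F_n(t, x+y), x*⟩ ≤ a'(1 + ‖y‖)^N + b'‖x‖ for all t ∈ [0,T], x ∈ D, y ∈ B and x* ∈ ∂‖x‖. -/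
open MeasureTheory Filter Set

/-- the truncated nonlinearity `F_n` satisfies the same dissipativity
estimate as `F`, when `A` is dissipative. -/
theorem stmt_15
    {B : Type*} [NormedAddCommGroup B] [NormedSpace ℝ B]
    (D : Subspace ℝ B) (A : D →ₗ[ℝ] B)
    -- A is dissipative: ⟨Ax, x*⟩ ≤ 0 for all x ∈ D and x* ∈ ∂‖x‖
    (hdiss : ∀ x : D, ∀ φ : B →L[ℝ] ℝ, ‖φ‖ = 1 → φ (x : B) = ‖(x : B)‖ → φ (A x) ≤ 0)
    (T : ℝ) (hT : 0 < T)
    (F : ℝ → B → B)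
    (a' b' N : ℝ) (ha' : 0 ≤ a') (hb' : 0 ≤ b') (hN : 1 ≤ N)
    (hF : ∀ t ∈ Set.Icc 0 T, ∀ x : D, ∀ y : B, ∀ φ : B →L[ℝ] ℝ,
      ‖φ‖ = 1 → φ (x : B) = ‖(x : B)‖ →
        φ (A x + F t ((x : B) + y)) ≤ a' * (1 + ‖y‖) ^ N + b' * ‖(x : B)‖)
    (n : ℕ) (hn : 1 ≤ n)
    (Fn : ℝ → B → B)
    (hFn : ∀ t : ℝ, ∀ z : B,
      Fn t z = if ‖z‖ ≤ (n : ℝ) then F t z else F t (((n : ℝ) / ‖z‖) • z)) :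
    ∀ t ∈ Set.Icc 0 T, ∀ x : D, ∀ y : B, ∀ φ : B →L[ℝ] ℝ,
      ‖φ‖ = 1 → φ (x : B) = ‖(x : B)‖ →
        φ (A x + Fn t ((x : B) + y)) ≤ a' * (1 + ‖y‖) ^ N + b' * ‖(x : B)‖ := by
  intro t ht x y φ hφ hφx
  rw [hFn]
  by_cases h : ‖(x : B) + y‖ ≤ (n : ℝ)
  · rw [if_pos h]
    exact hF t ht x y φ hφ hφx
  · rw [if_neg h]
    set z : B := (x : B) + y with hz
    have hzn : (n : ℝ) < ‖z‖ := not_le.mp h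
    have hn1 : (1 : ℝ) ≤ (n : ℝ) := by exact_mod_cast hn
    have hzpos : 0 < ‖z‖ := lt_of_lt_of_le (lt_of_lt_of_le one_pos hn1) hzn.le
    set c : ℝ := (n : ℝ) / ‖z‖ with hc
    have hc0 : 0 < c := div_pos (lt_of_lt_of_le one_pos hn1) hzpos
    have hc1 : c ≤ 1 := (div_le_one hzpos).mpr hzn.le
    -- apply hF with c•x and c•y
    have hφcx : φ ((c • x : D) : B) = ‖((c • x : D) : B)‖ := by
      have : ((c • x : D) : B) = c • (x : B) := rfl
      rw [this, _root_.map_smul, hφx, norm_smul, Real.norm_eq_abs, abs_of_pos hc0]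
      rfl
    have hsum : ((c • x : D) : B) + c • y = c • z := by
      rw [hz, smul_add]; rfl
    have hkey := hF t ht (c • x) (c • y) φ hφ hφcx
    rw [hsum] at hkey
    have hAx : φ (A x) ≤ 0 := hdiss x φ hφ hφx
    have hAsmul : A (c • x) = c • A x := map_smul A c x
    have hsplit : φ (A x + F t (c • z)) =
        (1 - c) * φ (A x) + φ (A (c • x) + F t (c • z)) := by
      rw [hAsmul, map_add, map_add, _root_.map_smul]
      simp only [smul_eq_mul]
      ring
    rw [hsplit]
    have h1 : (1 - c) * φ (A x) ≤ 0 :=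
      mul_nonpos_of_nonneg_of_nonpos (by linarith) hAx
    have hN0 : (0 : ℝ) ≤ N := le_trans zero_le_one hN
    have hcy : ‖c • y‖ ≤ ‖y‖ := by
      rw [norm_smul, Real.norm_eq_abs, abs_of_pos hc0]
      nlinarith [norm_nonneg y]
    have hcx : ‖((c • x : D) : B)‖ ≤ ‖(x : B)‖ := by
      have : ((c • x : D) : B) = c • (x : B) := rfl
      rw [this, norm_smul, Real.norm_eq_abs, abs_of_pos hc0]
      nlinarith [norm_nonneg (x : B)]
    have hrpow : (1 + ‖c • y‖) ^ N ≤ (1 + ‖y‖) ^ N :=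
      Real.rpow_le_rpow (by positivity) (by linarith) hN0
    have h2 : a' * (1 + ‖c • y‖) ^ N + b' * ‖((c • x : D) : B)‖ ≤
        a' * (1 + ‖y‖) ^ N + b' * ‖(x : B)‖ := by
      gcongr
    linarith
end

section
/- Let b, m, γ > 0 and T > 0, and let φ : [0,T] → [0,∞) be absolutely continuous with φ(0) = 0 and φ'(t) ≤ −b φ(t)^m + γ^m for almost every t ∈ (0,T). Then φ(t) ≤ (2/b)^{1/m} γ for all t ∈ [0,T]. -/
/-!
Put `M = (2 / b) ^ (1 / m) * γ`, so that `b * M ^ m = 2 * γ ^ m ≥ γ ^ m`. Wherever `φ > M` the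
differential inequality forces `φ' ≤ 0`. If `φ t > M`, let `s` be the last time before `t` with
`φ s ≤ M` (it exists since `φ 0 = 0` and `φ` is continuous); on `(s, t)` the function then
cannot increase, so `φ t ≤ φ s ≤ M`, a contradiction.
-/

open MeasureTheory Filter Set

lemma ContinuousOn.exists_last_le {φ : ℝ → ℝ} {a t M : ℝ} (hφ : ContinuousOn φ (Icc a t))
    (hat : a ≤ t) (ha : φ a ≤ M) :
    ∃ s ∈ Icc a t, φ s ≤ M ∧ ∀ r ∈ Ioo s t, M < φ r := by
  set S := Icc a t ∩ φ ⁻¹' Iic M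
  have hS_closed : IsClosed S := hφ.preimage_isClosed_of_isClosed isClosed_Icc isClosed_Iic
  have hS_bdd : BddAbove S := ⟨t, fun r hr => hr.1.2⟩
  have hS_ne : S.Nonempty := ⟨a, ⟨left_mem_Icc.mpr hat, ha⟩⟩
  obtain ⟨hs_mem, hs_le⟩ := hS_closed.csSup_mem hS_ne hS_bdd
  refine ⟨sSup S, hs_mem, hs_le, fun r hr => lt_of_not_ge fun hrM => ?_⟩
  have hrS : r ∈ S := ⟨⟨hs_mem.1.trans hr.1.le, hr.2.le⟩, hrM⟩
  exact (le_csSup hS_bdd hrS).not_gt hr.1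

lemma continuousOn_of_eq_add_integral {φ dφ : ℝ → ℝ} {a b : ℝ}
    (hint : IntegrableOn dφ (Icc a b))
    (hftc : ∀ t ∈ Icc a b, φ t = φ a + ∫ r in a..t, dφ r) :
    ContinuousOn φ (Icc a b) := by
  refine ((continuousOn_const (c := φ a)).add (intervalIntegral.continuousOn_primitive hint)).congr
    fun t ht => ?_
  rw [hftc t ht, intervalIntegral.integral_of_le ht.1, Pi.add_apply]

theorem le_of_ae_deriv_nonpos_of_lt {φ dφ : ℝ → ℝ} {a b M : ℝ}
    (hint : IntegrableOn dφ (Icc a b))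
    (hftc : ∀ s t, a ≤ s → s ≤ t → t ≤ b → φ t = φ s + ∫ r in s..t, dφ r)
    (ha : φ a ≤ M)
    (hderiv : ∀ᵐ r ∂(volume.restrict (Ioo a b)), M < φ r → dφ r ≤ 0) :
    ∀ t ∈ Icc a b, φ t ≤ M := by
  intro t ht
  have hcont : ContinuousOn φ (Icc a t) :=
    (continuousOn_of_eq_add_integral hint fun r hr => hftc a r le_rfl hr.1 hr.2).mono
      (Icc_subset_Icc_right ht.2)
  obtain ⟨s, hs, hsM, hgt⟩ := hcont.exists_last_le ht.1 ha
  have hnonpos : ∀ᵐ r ∂(volume.restrict (Ioo s t)), dφ r ≤ 0 := by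
    have hsub : Ioo s t ⊆ Ioo a b := Ioo_subset_Ioo hs.1 ht.2
    filter_upwards [ae_restrict_of_ae_restrict_of_subset hsub hderiv,
      ae_restrict_mem measurableSet_Ioo] with r hr hrst
    exact hr (hgt r hrst)
  have hintegral : ∫ r in s..t, dφ r ≤ 0 := by
    rw [intervalIntegral.integral_of_le hs.2, ← restrict_Ioo_eq_restrict_Ioc]
    exact integral_nonpos_of_ae hnonpos
  linarith [hftc s t hs.1 hs.2 ht.2]

lemma rpow_le_mul_rpow_of_le {b m γ c x : ℝ} (hb : 0 < b) (hm : 0 < m) (hγ : 0 ≤ γ)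
    (hc : 1 ≤ c) (hx : (c / b) ^ (1 / m) * γ ≤ x) :
    γ ^ m ≤ b * x ^ m := by
  have hcb : 0 ≤ c / b := by positivity
  have hpow : c / b * γ ^ m ≤ x ^ m := by
    calc c / b * γ ^ m = ((c / b) ^ (1 / m) * γ) ^ m := by
          rw [Real.mul_rpow (by positivity) hγ, ← Real.rpow_mul hcb, one_div_mul_cancel hm.ne',
            Real.rpow_one]
      _ ≤ x ^ m := Real.rpow_le_rpow (by positivity) hx hm.le
  have hγm : 0 ≤ γ ^ m := Real.rpow_nonneg hγ m
  calc γ ^ m ≤ c * γ ^ m := le_mul_of_one_le_left hγm hc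
    _ = b * (c / b * γ ^ m) := by field_simp
    _ ≤ b * x ^ m := mul_le_mul_of_nonneg_left hpow hb.le

theorem stmt_16_general
    (b m γ T : ℝ) (hb : 0 < b) (hm : 0 < m) (hγ : 0 < γ)
    (φ dφ : ℝ → ℝ)
    (hφ0 : φ 0 = 0)
    (hφint : IntegrableOn dφ (Set.Icc 0 T))
    (hφftc : ∀ s t : ℝ, 0 ≤ s → s ≤ t → t ≤ T → φ t = φ s + ∫ r in s..t, dφ r)
    -- the differential inequality a.e. on (0, T)
    (hineq : ∀ᵐ t ∂(volume.restrict (Set.Ioo 0 T)), dφ t ≤ -b * φ t ^ m + γ ^ m) :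
    ∀ t ∈ Set.Icc 0 T, φ t ≤ (2 / b) ^ (1 / m) * γ := by
  refine le_of_ae_deriv_nonpos_of_lt hφint hφftc (by rw [hφ0]; positivity) ?_
  filter_upwards [hineq] with r hr hgt
  linarith [rpow_le_mul_rpow_of_le hb hm hγ.le one_le_two hgt.le]

/-- ODE-type bound for an absolutely continuous function. -/
theorem stmt_16
    (b m γ T : ℝ) (hb : 0 < b) (hm : 0 < m) (hγ : 0 < γ) (hT : 0 < T)
    (φ dφ : ℝ → ℝ)
    (hφ0 : φ 0 = 0)
    (hφnonneg : ∀ t ∈ Set.Icc 0 T, 0 ≤ φ t)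
    -- absolute continuity: a.e. differentiability, integrable derivative, FTC
    (hφderiv : ∀ᵐ t ∂(volume.restrict (Set.Icc 0 T)), HasDerivAt φ (dφ t) t)
    (hφint : IntegrableOn dφ (Set.Icc 0 T))
    (hφftc : ∀ s t : ℝ, 0 ≤ s → s ≤ t → t ≤ T → φ t = φ s + ∫ r in s..t, dφ r)
    -- the differential inequality a.e. on (0, T)
    (hineq : ∀ᵐ t ∂(volume.restrict (Set.Ioo 0 T)), dφ t ≤ -b * φ t ^ m + γ ^ m) :
    ∀ t ∈ Set.Icc 0 T, φ t ≤ (2 / b) ^ (1 / m) * γ :=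
  stmt_16_general b m γ T hb hm hγ φ dφ hφ0 hφint hφftc hineq
end

section
/- Let k ≥ 0 be an integer, a' ≥ 0, and let f : ℝ → ℝ satisfy −a'(1 + |η|^{2k+1} 𝟙_{η ≥ 0}) ≤ f(η) ≤ a'(1 + |η|^{2k+1} 𝟙_{η ≤ 0}) for all η ∈ ℝ. Then f(η + ζ) · sgn(η) ≤ a'(1 + |ζ|^{2k+1}) for all η, ζ ∈ ℝ. -/
/-! Translating by `η > 0` can only shrink `|η + ζ|` on the half-line `η + ζ ≤ 0`, where the
polynomial part of the upper bound lives; symmetrically for `η < 0` and the lower bound. -/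

theorem pow_abs_add_mul_ite_nonpos_le {η ζ : ℝ} (n : ℕ) (hη : 0 ≤ η) :
    |η + ζ| ^ n * (if η + ζ ≤ 0 then (1:ℝ) else 0) ≤ |ζ| ^ n := by
  split_ifs with h
  · rw [mul_one]
    refine pow_le_pow_left₀ (abs_nonneg _) ?_ n
    rw [abs_of_nonpos h, abs_of_nonpos (by linarith)]
    linarith
  · rw [mul_zero]
    positivity

theorem pow_abs_add_mul_ite_nonneg_le {η ζ : ℝ} (n : ℕ) (hη : η ≤ 0) :
    |η + ζ| ^ n * (if 0 ≤ η + ζ then (1:ℝ) else 0) ≤ |ζ| ^ n := by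
  have h := pow_abs_add_mul_ite_nonpos_le (ζ := -ζ) n (neg_nonneg.2 hη)
  simpa only [← neg_add, abs_neg, neg_nonpos] using h

/-- the translated dissipativity bound for the reaction term. -/
theorem stmt_18 (k : ℕ) (a' : ℝ) (ha' : 0 ≤ a') (f : ℝ → ℝ)
    (hf : ∀ η : ℝ,
      -a' * (1 + |η| ^ (2 * k + 1) * (if 0 ≤ η then (1:ℝ) else 0)) ≤ f η ∧
        f η ≤ a' * (1 + |η| ^ (2 * k + 1) * (if η ≤ 0 then (1:ℝ) else 0))) :
    ∀ η ζ : ℝ, f (η + ζ) * Real.sign η ≤ a' * (1 + |ζ| ^ (2 * k + 1)) := by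
  intro η ζ
  rcases lt_trichotomy η 0 with hη | rfl | hη
  · rw [Real.sign_of_neg hη, mul_neg_one, neg_le]
    calc -(a' * (1 + |ζ| ^ (2 * k + 1)))
        ≤ -a' * (1 + |η + ζ| ^ (2 * k + 1) * (if 0 ≤ η + ζ then (1:ℝ) else 0)) := by
          rw [neg_mul, neg_le_neg_iff]
          gcongr
          exact pow_abs_add_mul_ite_nonneg_le _ hη.le
      _ ≤ f (η + ζ) := (hf _).1
  · rw [Real.sign_zero, mul_zero]
    positivity
  · rw [Real.sign_of_pos hη, mul_one]
    calc f (η + ζ)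
        ≤ a' * (1 + |η + ζ| ^ (2 * k + 1) * (if η + ζ ≤ 0 then (1:ℝ) else 0)) := (hf _).2
      _ ≤ a' * (1 + |ζ| ^ (2 * k + 1)) := by
          gcongr
          exact pow_abs_add_mul_ite_nonpos_le _ hη.le
end

section
/- Let k ≥ 0 be an integer, a₁, a₂ ∈ ℝ, b₁, b₂ > 0, and let f : ℝ → ℝ satisfy a₁ − b₁ η^{2k+1} ≤ f(η) ≤ a₂ − b₂ η^{2k+1} for all η ∈ ℝ. Then there exist constants a ≥ 0, b > 0 and c ≥ 0, depending only on a₁, a₂, b₁, b₂ and k, such that ( f(η + ζ) − f(ζ) ) · sgn(η) ≤ a − b |η|^{2k+1} + c |ζ|^{2k+1} for all η, ζ ∈ ℝ. -/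
/-!
If `η ≥ 0`, then `η ≤ (η + ζ) + |ζ|`, and the convexity bound `(u + v)ⁿ ≤ 2ⁿ⁻¹ (uⁿ + vⁿ)` turns the
upper bound `f(η + ζ) ≤ a₂ - b₂ (η + ζ)ⁿ` into `f(η + ζ) ≤ a₂ - b₂ ηⁿ / 2ⁿ⁻¹ + 2 b₂ |ζ|ⁿ`; the lower
bound on `f ζ` costs only `b₁ |ζ|ⁿ`. For `η < 0`, apply this to `x ↦ -f (-x)`, which satisfies the
same kind of bounds with the roles of `b₁` and `b₂` exchanged since `n = 2k + 1` is odd.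
-/

lemma pow_le_two_pow_mul_add_pow (n : ℕ) {x : ℝ} (hx : 0 ≤ x) (y : ℝ) :
    x ^ n ≤ 2 ^ (n - 1) * ((x + y) ^ n + 2 * |y| ^ n) := by
  have hy : 0 ≤ |y| ^ n := by positivity
  have h2 : (1 : ℝ) ≤ 2 ^ (n - 1) := one_le_pow₀ one_le_two
  rcases le_or_gt 0 (x + y) with hxy | hxy
  · calc x ^ n ≤ ((x + y) + |y|) ^ n := by gcongr; linarith [neg_abs_le y]
      _ ≤ 2 ^ (n - 1) * ((x + y) ^ n + |y| ^ n) := add_pow_le hxy (abs_nonneg y) n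
      _ ≤ 2 ^ (n - 1) * ((x + y) ^ n + 2 * |y| ^ n) := by gcongr; linarith
  · have hxy_abs : |x + y| ≤ |y| := by
      rw [abs_of_neg hxy, abs_of_neg (by linarith)]; linarith
    have hlow : -|y| ^ n ≤ (x + y) ^ n :=
      calc -|y| ^ n ≤ -|x + y| ^ n := by gcongr
        _ = -|(x + y) ^ n| := by rw [abs_pow]
        _ ≤ (x + y) ^ n := neg_abs_le _
    have hx_le : x ^ n ≤ |y| ^ n := by
      gcongr; rw [abs_of_neg (by linarith)]; linarith
    nlinarith

lemma sub_le_of_bounds_of_nonneg {n : ℕ} {a₁ a₂ b₁ b₂ : ℝ} (hb₁ : 0 ≤ b₁) (hb₂ : 0 ≤ b₂)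
    {f : ℝ → ℝ} (hf : ∀ x, a₁ - b₁ * x ^ n ≤ f x ∧ f x ≤ a₂ - b₂ * x ^ n)
    {η : ℝ} (hη : 0 ≤ η) (ζ : ℝ) :
    f (η + ζ) - f ζ ≤ (a₂ - a₁) - b₂ / 2 ^ (n - 1) * η ^ n + (b₁ + 2 * b₂) * |ζ| ^ n := by
  have hshift : b₂ / 2 ^ (n - 1) * η ^ n ≤ b₂ * ((η + ζ) ^ n + 2 * |ζ| ^ n) := by
    rw [div_mul_eq_mul_div, div_le_iff₀' (by positivity), mul_left_comm]
    exact mul_le_mul_of_nonneg_left (pow_le_two_pow_mul_add_pow n hη ζ) hb₂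
  have hζ : b₁ * ζ ^ n ≤ b₁ * |ζ| ^ n :=
    mul_le_mul_of_nonneg_left ((le_abs_self _).trans (abs_pow ζ n).le) hb₁
  linarith [(hf (η + ζ)).2, (hf ζ).1]

lemma bounds_neg_comp_neg {n : ℕ} (hn : Odd n) {a₁ a₂ b₁ b₂ : ℝ} {f : ℝ → ℝ}
    (hf : ∀ x, a₁ - b₁ * x ^ n ≤ f x ∧ f x ≤ a₂ - b₂ * x ^ n) (x : ℝ) :
    -a₂ - b₂ * x ^ n ≤ -f (-x) ∧ -f (-x) ≤ -a₁ - b₁ * x ^ n := by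
  obtain ⟨hlo, hhi⟩ := hf (-x)
  rw [hn.neg_pow] at hlo hhi
  constructor <;> linarith

/-- dissipativity of increments for a polynomially bounded reaction term. -/
theorem stmt_19 (k : ℕ) (a₁ a₂ b₁ b₂ : ℝ) (hb₁ : 0 < b₁) (hb₂ : 0 < b₂) :
    ∃ a : ℝ, 0 ≤ a ∧ ∃ b : ℝ, 0 < b ∧ ∃ c : ℝ, 0 ≤ c ∧
      ∀ f : ℝ → ℝ,
        (∀ η : ℝ, a₁ - b₁ * η ^ (2 * k + 1) ≤ f η ∧ f η ≤ a₂ - b₂ * η ^ (2 * k + 1)) →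
        ∀ η ζ : ℝ,
          (f (η + ζ) - f ζ) * Real.sign η ≤ a - b * |η| ^ (2 * k + 1) + c * |ζ| ^ (2 * k + 1) := by
  have hodd : Odd (2 * k + 1) := odd_two_mul_add_one k
  refine ⟨|a₂ - a₁|, abs_nonneg _, min b₁ b₂ / 2 ^ (2 * k), by positivity,
    2 * (b₁ + b₂), by positivity, fun f hf η ζ => ?_⟩
  have ha := le_abs_self (a₂ - a₁)
  have hζ : 0 ≤ |ζ| ^ (2 * k + 1) := by positivity
  rcases lt_trichotomy η 0 with hη | rfl | hη
  · rw [Real.sign_of_neg hη, abs_of_neg hη]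
    have h := sub_le_of_bounds_of_nonneg hb₂.le hb₁.le (bounds_neg_comp_neg hodd hf)
      (neg_nonneg.2 hη.le) (-ζ)
    rw [← neg_add, neg_neg, neg_neg, abs_neg, Nat.add_sub_cancel] at h
    have hb : min b₁ b₂ / 2 ^ (2 * k) * (-η) ^ (2 * k + 1) ≤ b₁ / 2 ^ (2 * k) * (-η) ^ (2 * k + 1) :=
      mul_le_mul_of_nonneg_right (by gcongr; exact min_le_left _ _) (pow_nonneg (by linarith) _)
    linarith [mul_nonneg hb₂.le hζ]
  · rw [Real.sign_zero, mul_zero, abs_zero, zero_pow (by omega), mul_zero, sub_zero]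
    positivity
  · rw [Real.sign_of_pos hη, abs_of_pos hη]
    have h := sub_le_of_bounds_of_nonneg hb₁.le hb₂.le hf hη.le ζ
    rw [Nat.add_sub_cancel] at h
    have hb : min b₁ b₂ / 2 ^ (2 * k) * η ^ (2 * k + 1) ≤ b₂ / 2 ^ (2 * k) * η ^ (2 * k + 1) := by
      gcongr; exact min_le_right _ _
    linarith [mul_nonneg hb₁.le hζ]
end
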